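/- arXiv:1602.02915 — 6 statements merged into one kernel-verified Lean document; each statement's English description precedes it below -/
import Mathlib

section
/- Let f_i : ℝ^n → (−∞,∞], 1 ≤ i ≤ r, be proper closed functions, let f := min_{1≤i≤r} f_i, suppose f is continuous on dom ∂f, and let x̄ ∈ dom ∂f ∩ (⋂_{i∈I(x̄)} dom ∂f_i), where I(x̄) := {i : f_i(x̄) = f(x̄)}. Suppose each f_i with i ∈ I(x̄) satisfies the KL property at x̄ with exponent α_i ∈ [0,1). Then f satisfies the KL property at x̄ with exponent α = max{α_i : i ∈ I(x̄)}. -/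
/-!
Near `xbar`, lower semicontinuity keeps every inactive piece (`g i xbar > f xbar`) above
`f xbar + δ`, so at the points `x` where `f xbar < f x < f xbar + δ` the minimum is attained only
by active pieces. A limiting subgradient of the minimum is a limiting subgradient of a piece
attaining it: along a subsequence one piece stays active, and a regular subgradient of `f` at a
point is one of every `g ≥ f` touching `f` there. The KL inequalities of the active pieces, with
their exponents raised to `αmax` (harmless because the gap `f x - f xbar` is below `1`), therefore
transfer to `f`.
-/

open Filter Topology Metric Set
open scoped RealInnerProductSpace

noncomputable section

variable {E : Type*} [NormedAddCommGroup E] [InnerProductSpace ℝ E]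

/-- The effective domain of an extended-real-valued function. -/
def edomain (f : E → EReal) : Set E := {x | f x < ⊤}

/-- A proper function: never `⊥` and not identically `⊤`. -/
def ProperFn (f : E → EReal) : Prop := (∀ x, f x ≠ ⊥) ∧ ∃ x, f x < ⊤

/-- The regular (Fréchet) subdifferential. -/
def regSubdiff (f : E → EReal) (x : E) : Set E :=
  {v | f x < ⊤ ∧ ∀ ε : ℝ, 0 < ε →
    ∀ᶠ z in 𝓝 x, f x + ((⟪v, z - x⟫ - ε * ‖z - x‖ : ℝ) : EReal) ≤ f z}

/-- The limiting (Mordukhovich) subdifferential. -/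
def limSubdiff (f : E → EReal) (x : E) : Set E :=
  {v | f x < ⊤ ∧ ∃ (xs vs : ℕ → E),
    Tendsto xs atTop (𝓝 x) ∧ Tendsto (fun t => f (xs t)) atTop (𝓝 (f x)) ∧
    Tendsto vs atTop (𝓝 v) ∧ ∀ t, vs t ∈ regSubdiff f (xs t)}

/-- The domain of the limiting subdifferential. -/
def subdiffDom (f : E → EReal) : Set E := {x | (limSubdiff f x).Nonempty}

/-- `f` satisfies the KL property at `xbar` with exponent `α`. -/
def KLAt (f : E → EReal) (xbar : E) (α : ℝ) : Prop :=
  ∃ c > (0:ℝ), ∃ ε > (0:ℝ), ∃ ν : EReal, 0 < ν ∧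
    ∀ x : E, ‖x - xbar‖ ≤ ε → f xbar < f x → f x < f xbar + ν →
      ENNReal.ofReal (c * (f x - f xbar).toReal ^ α) ≤ EMetric.infEdist 0 (limSubdiff f x)

/-- `f` is a KL function with exponent `α`. -/
def IsKL (f : E → EReal) (α : ℝ) : Prop := ∀ x ∈ subdiffDom f, KLAt f x α

open Classical in
/-- Indicator function of a set. -/
def indic (C : Set E) : E → EReal := fun x => if x ∈ C then 0 else ⊤

/-- `w` is the proximal point of `P` at `z`. -/
def IsProxPt (P : E → EReal) (z w : E) : Prop :=
  ∀ y : E, P w + ((1/2 * ‖w - z‖^2 : ℝ) : EReal) ≤ P y + ((1/2 * ‖y - z‖^2 : ℝ) : EReal)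

/-- A polyhedral set: a finite intersection of closed half-spaces. -/
def IsPolyhedralSet {F : Type*} [AddCommGroup F] [Module ℝ F] (S : Set F) : Prop :=
  ∃ (k : ℕ) (φ : Fin k → (F →ₗ[ℝ] ℝ)) (b : Fin k → ℝ), S = {x | ∀ i, φ i x ≤ b i}

/-- A proper closed polyhedral function: proper, closed, with polyhedral epigraph. -/
def IsPolyhedralFn (P : E → EReal) : Prop :=
  ProperFn P ∧ LowerSemicontinuous P ∧
    IsPolyhedralSet {p : E × ℝ | P p.1 ≤ (p.2 : EReal)}

/-- Convexity of an extended-real-valued function, via convexity of its epigraph. -/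
def EConvex (f : E → EReal) : Prop := Convex ℝ {p : E × ℝ | f p.1 ≤ (p.2 : EReal)}

theorem LowerSemicontinuousAt.le_of_tendsto {α β γ : Type*} [TopologicalSpace α] [LinearOrder γ]
    [TopologicalSpace γ] [OrderTopology γ] [DenselyOrdered γ] {f : α → γ} {x : α}
    (hf : LowerSemicontinuousAt f x) {l : Filter β} [l.NeBot] {u : β → α}
    (hu : Tendsto u l (𝓝 x)) {y : γ} (hy : Tendsto (f ∘ u) l (𝓝 y)) : f x ≤ y := by
  by_contra! hlt
  obtain ⟨z, hyz, hzx⟩ := exists_between hlt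
  obtain ⟨t, hzt, htz⟩ := ((hu.eventually (hf z hzx)).and (hy.eventually (gt_mem_nhds hyz))).exists
  exact lt_asymm hzt htz

theorem LowerSemicontinuousAt.eventually_add_lt {F : Type*} [SeminormedAddCommGroup F]
    {g : F → EReal} {xbar : F} (hg : LowerSemicontinuousAt g xbar) {a : EReal} (ha : a < g xbar) :
    ∀ᶠ δ : ℝ in 𝓝[>] 0, ∀ x, ‖x - xbar‖ ≤ δ → a + (δ : EReal) < g x := by
  obtain ⟨q, haq, hq⟩ := EReal.lt_iff_exists_real_btwn.mp ha
  have hball : ∀ᶠ δ : ℝ in 𝓝[>] 0, closedBall xbar δ ⊆ {x | (q : EReal) < g x} :=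
    (eventually_closedBall_subset (hg q hq)).filter_mono nhdsWithin_le_nhds
  have hadd : ∀ᶠ δ : ℝ in 𝓝[>] 0, a + (δ : EReal) ≤ q := by
    induction a using EReal.rec with
    | bot => simp
    | coe a =>
      filter_upwards [Ioo_mem_nhdsGT (sub_pos.mpr (EReal.coe_lt_coe_iff.mp haq))] with δ hδ
      exact_mod_cast (lt_sub_iff_add_lt'.mp hδ.2).le
    | top => exact absurd haq not_top_lt
  filter_upwards [hball, hadd] with δ hδ haδ x hx
  exact haδ.trans_lt (hδ (mem_closedBall_iff_norm.mpr hx))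

theorem EReal.toReal_sub_mem_Ioo {a b : EReal} {r : ℝ} (hab : a < b) (hb : b < a + r) :
    (b - a).toReal ∈ Ioo 0 r := by
  induction a using EReal.rec <;> induction b using EReal.rec <;> simp_all
  norm_cast at *
  simp only [EReal.toReal_coe]
  constructor <;> linarith

theorem regSubdiff_subset_of_le_of_eq {f g : E → EReal} {w : E} (hfg : f ≤ g) (heq : g w = f w) :
    regSubdiff f w ⊆ regSubdiff g w := by
  rintro v ⟨hw, hv⟩
  refine ⟨heq ▸ hw, fun ε hε => (hv ε hε).mono fun z hz => ?_⟩
  rw [heq]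
  exact hz.trans (hfg z)

theorem limSubdiff_iInf_subset {ι : Type*} [Finite ι] {g : ι → E → EReal}
    (hg : ∀ i, LowerSemicontinuous (g i)) {x v : E}
    (hv : v ∈ limSubdiff (fun y => ⨅ i, g i y) x) :
    ∃ i, g i x = ⨅ j, g j x ∧ v ∈ limSubdiff (g i) x := by
  obtain ⟨hx, xs, vs, hxs, hfxs, hvs, hreg⟩ := hv
  have : Nonempty ι := by
    by_contra h
    simp [not_nonempty_iff.mp h] at hx
  obtain ⟨i, hi⟩ : ∃ i, ∃ᶠ t in atTop, g i (xs t) = ⨅ j, g j (xs t) :=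
    frequently_exists.mp (.of_forall fun t => exists_eq_ciInf_of_finite)
  obtain ⟨φ, hφ, hφi⟩ := extraction_of_frequently_atTop hi
  have hxφ := hxs.comp hφ.tendsto_atTop
  have hgφ : Tendsto (g i ∘ xs ∘ φ) atTop (𝓝 (⨅ j, g j x)) :=
    (hfxs.comp hφ.tendsto_atTop).congr fun t => (hφi t).symm
  have hgi : g i x = ⨅ j, g j x :=
    le_antisymm (LowerSemicontinuousAt.le_of_tendsto (hg i x) hxφ hgφ) (iInf_le _ i)
  refine ⟨i, hgi, hgi ▸ hx, xs ∘ φ, vs ∘ φ, hxφ, hgi ▸ hgφ, hvs.comp hφ.tendsto_atTop, fun t => ?_⟩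
  exact regSubdiff_subset_of_le_of_eq (fun y => iInf_le _ i) (hφi t) (hreg (φ t))

/-- The constants `c`, `ε`, `ν` of `KLAt` can all be shrunk, so one small `δ` serves for all
three; in this form finitely many KL properties combine through `eventually_all`. -/
theorem klAt_iff_eventually {f : E → EReal} {xbar : E} {α : ℝ} :
    KLAt f xbar α ↔ ∀ᶠ δ : ℝ in 𝓝[>] 0, ∀ x, ‖x - xbar‖ ≤ δ → f xbar < f x →
      f x < f xbar + δ →
        ENNReal.ofReal (δ * (f x - f xbar).toReal ^ α) ≤ infEDist 0 (limSubdiff f x) := by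
  constructor
  · rintro ⟨c, hc, ε, hε, ν, hν, hKL⟩
    obtain ⟨ρ, hρ, hρν⟩ := EReal.lt_iff_exists_real_btwn.mp hν
    filter_upwards [Ioo_mem_nhdsGT (lt_min hc (lt_min hε (EReal.coe_pos.mp hρ)))]
      with δ ⟨hδ, hδc⟩ x hx h1 h2
    simp only [lt_min_iff] at hδc
    have hν' : f xbar + δ ≤ f xbar + ν :=
      add_le_add le_rfl ((EReal.coe_le_coe_iff.mpr hδc.2.2.le).trans hρν.le)
    refine le_trans (ENNReal.ofReal_le_ofReal ?_) (hKL x (hx.trans hδc.2.1.le) h1 (h2.trans_le hν'))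
    exact mul_le_mul_of_nonneg_right hδc.1.le
      (Real.rpow_nonneg (EReal.toReal_sub_mem_Ioo h1 h2).1.le _)
  · intro h
    obtain ⟨δ, hKL, hδ⟩ := (h.and self_mem_nhdsWithin).exists
    exact ⟨δ, hδ, δ, hδ, δ, EReal.coe_pos.mpr hδ, hKL⟩

theorem KLAt.of_exponent_le {f : E → EReal} {xbar : E} {α β : ℝ} (h : KLAt f xbar α)
    (hαβ : α ≤ β) : KLAt f xbar β := by
  rw [klAt_iff_eventually] at h ⊢
  filter_upwards [h, Ioo_mem_nhdsGT one_pos] with δ hδ ⟨hδ0, hδ1⟩ x hx h1 h2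
  have h2' : f x < f xbar + (1 : ℝ) :=
    h2.trans_le (add_le_add le_rfl (EReal.coe_le_coe_iff.mpr hδ1.le))
  obtain ⟨ht0, ht1⟩ := EReal.toReal_sub_mem_Ioo h1 h2'
  refine le_trans (ENNReal.ofReal_le_ofReal ?_) (hδ x hx h1 h2)
  exact mul_le_mul_of_nonneg_left (Real.rpow_le_rpow_of_exponent_ge ht0 ht1.le hαβ) hδ0.le

theorem KLAt.iInf {ι : Type*} [Finite ι] {g : ι → E → EReal}
    (hg : ∀ i, LowerSemicontinuous (g i)) {xbar : E} {α : ℝ}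
    (hKL : ∀ i, g i xbar = ⨅ j, g j xbar → KLAt (g i) xbar α) :
    KLAt (fun x => ⨅ i, g i x) xbar α := by
  have hpiece : ∀ i, ∀ᶠ δ : ℝ in 𝓝[>] 0, ∀ x, ‖x - xbar‖ ≤ δ → ⨅ j, g j xbar < ⨅ j, g j x →
      ⨅ j, g j x < (⨅ j, g j xbar) + δ → g i x = ⨅ j, g j x →
        ENNReal.ofReal (δ * ((⨅ j, g j x) - ⨅ j, g j xbar).toReal ^ α) ≤
          infEDist 0 (limSubdiff (g i) x) := by
    intro i
    rcases (iInf_le (fun j => g j xbar) i).eq_or_lt with hactive | hinactive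
    · filter_upwards [klAt_iff_eventually.mp (hKL i hactive.symm)] with δ hδ x hx h1 h2 hgx
      rw [← hgx, hactive] at h1 h2 ⊢
      exact hδ x hx h1 h2
    · filter_upwards [LowerSemicontinuousAt.eventually_add_lt (hg i xbar) hinactive]
        with δ hδ x hx _ h2 hgx
      exact absurd (hgx ▸ h2) (hδ x hx).not_gt
  rw [klAt_iff_eventually]
  filter_upwards [eventually_all.mpr hpiece] with δ hδ x hx h1 h2
  refine le_infEDist.mpr fun v hv => ?_
  obtain ⟨i, hgx, hvi⟩ := limSubdiff_iInf_subset hg hv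
  exact (hδ i x hx h1 h2 hgx).trans (infEDist_le_edist_of_mem hvi)

theorem stmt_1_general {n r : ℕ} (g : Fin r → (EuclideanSpace ℝ (Fin n) → EReal))
    (hclosed : ∀ i, LowerSemicontinuous (g i))
    (f : EuclideanSpace ℝ (Fin n) → EReal) (hf : ∀ x, f x = ⨅ i, g i x)
    (xbar : EuclideanSpace ℝ (Fin n))
    (I : Set (Fin r)) (hI : I = {i | g i xbar = f xbar})
    (α : Fin r → ℝ)
    (hKL : ∀ i ∈ I, KLAt (g i) xbar (α i))
    (αmax : ℝ) (hmax2 : ∀ i ∈ I, α i ≤ αmax) :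
    KLAt f xbar αmax := by
  obtain rfl : f = fun x => ⨅ i, g i x := funext hf
  subst hI
  exact KLAt.iInf hclosed fun i hi => (hKL i hi).of_exponent_le (hmax2 i hi)

/-- KL exponent for the minimum of finitely many KL functions, at a point. -/
theorem stmt_1 {n r : ℕ} (hr : 0 < r) (g : Fin r → (EuclideanSpace ℝ (Fin n) → EReal))
    (hproper : ∀ i, ProperFn (g i)) (hclosed : ∀ i, LowerSemicontinuous (g i))
    (f : EuclideanSpace ℝ (Fin n) → EReal) (hf : ∀ x, f x = ⨅ i, g i x)
    (hcont : ContinuousOn f (subdiffDom f))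
    (xbar : EuclideanSpace ℝ (Fin n)) (hxbar : xbar ∈ subdiffDom f)
    (I : Set (Fin r)) (hI : I = {i | g i xbar = f xbar})
    (hxbar' : ∀ i ∈ I, xbar ∈ subdiffDom (g i))
    (α : Fin r → ℝ) (hα : ∀ i ∈ I, 0 ≤ α i ∧ α i < 1)
    (hKL : ∀ i ∈ I, KLAt (g i) xbar (α i))
    (αmax : ℝ) (hmax1 : ∃ i ∈ I, αmax = α i) (hmax2 : ∀ i ∈ I, α i ≤ αmax) :
    KLAt f xbar αmax :=
  stmt_1_general g hclosed f hf xbar I hI α hKL αmax hmax2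
end
end

section
/- Let n_1,…,n_m ∈ ℕ with n_1 + … + n_m = n, and let f(x) = Σ_{i=1}^m f_i(x_i) for x = (x_1,…,x_m) ∈ ℝ^n with x_i ∈ ℝ^{n_i}, where each f_i : ℝ^{n_i} → (−∞,∞] is a proper closed function. Suppose each f_i is a KL function with exponent α_i ∈ (0,1) and each f_i is continuous on dom ∂f_i. Then f is a KL function with exponent α = max{α_i : 1 ≤ i ≤ m}. -/
/-!
A limiting subgradient of a separable sum splits into limiting subgradients of the blocks:
for regular subgradients one perturbs a single block, and along an approximating sequence
lower semicontinuity of every `g j` together with `f (xᵗ) → f x` forces `g i (xᵗ i) → g i (x i)`.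
Hence `dist (0, ∂f x) ≥ dist (0, ∂g i (x i))` for every block.

Near `x̄`, continuity of `g i` on `dom ∂g i` keeps the increase `g i (x i) - g i (x̄ i)` below `1`,
where the KL inequality with exponent `α i` implies the one with the larger exponent `α`.
Applied to the block `i` with the largest increase `tᵢ`, for which `f x - f x̄ ≤ m tᵢ`, it gives
`dist (0, ∂f x) ≥ c tᵢ ^ α ≥ c m ^ (-α) (f x - f x̄) ^ α`.
-/

open Filter Topology Metric Set
open scoped RealInnerProductSpace

noncomputable section

variable {E : Type*} [NormedAddCommGroup E] [InnerProductSpace ℝ E]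

namespace EReal

variable {ι : Type*}

@[simp, norm_cast]
theorem coe_finset_sum (s : Finset ι) (a : ι → ℝ) :
    ((∑ i ∈ s, a i : ℝ) : EReal) = ∑ i ∈ s, (a i : EReal) :=
  map_sum (⟨⟨(↑), coe_zero⟩, coe_add⟩ : ℝ →+ EReal) a s

theorem finset_sum_ne_bot {s : Finset ι} {x : ι → EReal} (h : ∀ i ∈ s, x i ≠ ⊥) :
    ∑ i ∈ s, x i ≠ ⊥ :=
  Finset.sum_induction x (· ≠ ⊥) (fun _ _ ha hb => add_ne_bot_iff.2 ⟨ha, hb⟩) zero_ne_bot h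

theorem ne_top_of_sum_ne_top [Fintype ι] {x : ι → EReal} (hbot : ∀ i, x i ≠ ⊥)
    (htop : ∑ i, x i ≠ ⊤) (i : ι) : x i ≠ ⊤ := by
  classical
  rw [← Finset.add_sum_erase _ _ (Finset.mem_univ i)] at htop
  exact ((add_ne_top_iff_ne_top₂ (hbot i) (finset_sum_ne_bot fun j _ => hbot j)).1 htop).1

theorem exists_coe_of_sum_lt_top [Fintype ι] {x : ι → EReal} (hbot : ∀ i, x i ≠ ⊥)
    (htop : ∑ i, x i < ⊤) : ∃ a : ι → ℝ, ∀ i, x i = a i :=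
  ⟨fun i => (x i).toReal, fun i => (coe_toReal (ne_top_of_sum_ne_top hbot htop.ne i) (hbot i)).symm⟩

end EReal

section BlockConvergence

variable {ι T : Type*} [Fintype ι] {l : Filter T}

theorem tendsto_of_tendsto_sum_of_eventually_gt {u : ι → T → ℝ} {a : ι → ℝ}
    (hlow : ∀ j, ∀ b < a j, ∀ᶠ t in l, b < u j t)
    (hsum : Tendsto (fun t => ∑ j, u j t) l (𝓝 (∑ j, a j))) (i : ι) :
    Tendsto (u i) l (𝓝 (a i)) := by
  have hmin : ∀ j, Tendsto (fun t => min (u j t) (a j)) l (𝓝 (a j)) := fun j =>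
    tendsto_order.2 ⟨fun b hb => (hlow j b hb).mono fun t ht => lt_min ht hb,
      fun b hb => Eventually.of_forall fun t => (min_le_right _ _).trans_lt hb⟩
  have hupper : Tendsto (fun t => a i + (∑ j, u j t - ∑ j, min (u j t) (a j))) l (𝓝 (a i)) := by
    simpa using (tendsto_const_nhds (x := a i)).add
      (hsum.sub (tendsto_finsetSum Finset.univ fun j _ => hmin j))
  refine tendsto_of_tendsto_of_tendsto_of_le_of_le (hmin i) hupper
    (fun t => min_le_left _ _) fun t => ?_
  -- `u i t - a i` is at most the positive part of the `i`-th increment, hence at most their sum.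
  have hsingle := Finset.single_le_sum (f := fun j => u j t - min (u j t) (a j))
    (fun j _ => sub_nonneg.2 (min_le_left _ _)) (Finset.mem_univ i)
  rw [Finset.sum_sub_distrib] at hsingle
  linarith [min_le_right (u i t) (a i)]

theorem EReal.tendsto_of_tendsto_sum_of_eventually_gt {u : ι → T → EReal} {a : ι → ℝ}
    (hlow : ∀ j, ∀ b < (a j : EReal), ∀ᶠ t in l, b < u j t)
    (hsum : Tendsto (fun t => ∑ j, u j t) l (𝓝 ((∑ j, a j : ℝ) : EReal))) (i : ι) :
    Tendsto (u i) l (𝓝 (a i)) := by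
  have hfin : ∀ᶠ t in l, ∀ j, u j t = (u j t).toReal := by
    filter_upwards [eventually_all.2 fun j => hlow j _ (EReal.coe_lt_coe_iff.2 (sub_one_lt (a j))),
      hsum.eventually (gt_mem_nhds (coe_lt_top _))] with t hgt hlt
    obtain ⟨b, hb⟩ := exists_coe_of_sum_lt_top (fun j => ne_bot_of_gt (hgt j)) hlt
    exact fun j => by rw [hb, toReal_coe]
  refine (tendsto_coe.2 (_root_.tendsto_of_tendsto_sum_of_eventually_gt
    (u := fun j t => (u j t).toReal) (fun j b hb => ?_) ?_ i)).congr'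
      (hfin.mono fun t ht => (ht i).symm)
  · filter_upwards [hlow j b (EReal.coe_lt_coe_iff.2 hb), hfin] with t ht hc
    rw [hc j] at ht
    exact_mod_cast ht
  · rw [← tendsto_coe]
    refine hsum.congr' (hfin.mono fun t ht => ?_)
    push_cast
    exact Finset.sum_congr rfl fun j _ => ht j

end BlockConvergence

theorem exists_pos_and_sum_le_card_mul {ι : Type*} [Fintype ι] {t : ι → ℝ}
    (h : 0 < ∑ i, t i) : ∃ i, 0 < t i ∧ ∑ j, t j ≤ Fintype.card ι * t i := by
  obtain ⟨i, -, hi⟩ := Finset.exists_max_image Finset.univ t (Finset.nonempty_of_sum_ne_zero h.ne')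
  have hle : ∑ j, t j ≤ Fintype.card ι * t i := by
    simpa using Finset.sum_le_card_nsmul _ _ _ hi
  exact ⟨i, pos_of_mul_pos_right (h.trans_le hle) (Nat.cast_nonneg _), hle⟩

theorem LipschitzWith.infEDist_le {α β : Type*} [PseudoEMetricSpace α] [PseudoEMetricSpace β]
    {φ : α → β} (hφ : LipschitzWith 1 φ) {s : Set α} {t : Set β} (hst : MapsTo φ s t) (x : α) :
    infEDist (φ x) t ≤ infEDist x s :=
  le_infEDist.2 fun y hy => (infEDist_le_edist_of_mem (hst hy)).trans (by simpa using hφ x y)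

theorem klAt_of_eventually {f : E → EReal} {xbar : E} {α c : ℝ} (hc : 0 < c)
    (h : ∀ᶠ x in 𝓝 xbar, f xbar < f x →
      ENNReal.ofReal (c * (f x - f xbar).toReal ^ α) ≤ Metric.infEDist 0 (limSubdiff f x)) :
    KLAt f xbar α := by
  obtain ⟨ε, hε, hball⟩ := nhds_basis_closedBall.eventually_iff.1 h
  exact ⟨c, hc, ε, hε, ⊤, EReal.zero_lt_top,
    fun x hx hlt _ => hball (by rwa [mem_closedBall, dist_eq_norm]) hlt⟩

theorem KLAt.eventually_of_continuousWithinAt {g : E → EReal} {xbar : E} {α β : ℝ}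
    (hKL : KLAt g xbar α) (hαβ : α ≤ β) (hcont : ContinuousWithinAt g (subdiffDom g) xbar)
    (htop : g xbar ≠ ⊤) (hbot : g xbar ≠ ⊥) :
    ∃ c > 0, ∀ᶠ y in 𝓝[subdiffDom g] xbar, g xbar < g y →
      ENNReal.ofReal (c * (g y - g xbar).toReal ^ β) ≤ Metric.infEDist 0 (limSubdiff g y) := by
  obtain ⟨c, hc, ε, hε, ν, hν, hineq⟩ := hKL
  refine ⟨c, hc, ?_⟩
  obtain ⟨a, ha⟩ : ∃ a : ℝ, g xbar = a := ⟨_, (EReal.coe_toReal htop hbot).symm⟩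
  have hbelow : ∀ r : EReal, 0 < r → ∀ᶠ y in 𝓝[subdiffDom g] xbar, g y < a + r := fun r hr =>
    hcont.eventually (gt_mem_nhds (by simpa [ha] using EReal.add_lt_add_left_coe hr a))
  rw [ha] at hineq ⊢
  filter_upwards [mem_nhdsWithin_of_mem_nhds (closedBall_mem_nhds xbar hε),
    hbelow ν hν, hbelow 1 zero_lt_one] with y hy hyν hy1 hlt
  rw [mem_closedBall, dist_eq_norm] at hy
  refine le_trans ?_ (hineq y hy hlt hyν)
  lift g y to ℝ using ⟨ne_top_of_lt hy1, ne_bot_of_gt hlt⟩ with b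
  rw [← EReal.coe_sub, EReal.toReal_coe]
  have hab : 0 < b - a := sub_pos.2 (by exact_mod_cast hlt)
  have hba : b - a ≤ 1 := by
    rw [sub_le_iff_le_add']
    exact_mod_cast hy1.le
  gcongr ENNReal.ofReal (c * ?_)
  exact Real.rpow_le_rpow_of_exponent_ge hab hba hαβ

section SeparableSum

variable {ι : Type*} [Fintype ι] {F : ι → Type*} [∀ i, NormedAddCommGroup (F i)]
  {g : ∀ i, F i → EReal} {f : PiLp 2 F → EReal}

theorem tendsto_apply_of_eq_sum (hbot : ∀ i y, g i y ≠ ⊥)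
    (hlsc : ∀ i, LowerSemicontinuous (g i)) (hf : ∀ x, f x = ∑ i, g i (x i))
    {T : Type*} {l : Filter T} {x : PiLp 2 F} (hx : f x < ⊤) {xs : T → PiLp 2 F}
    (hxs : Tendsto xs l (𝓝 x)) (hfxs : Tendsto (fun t => f (xs t)) l (𝓝 (f x))) (i : ι) :
    Tendsto (fun t => g i (xs t i)) l (𝓝 (g i (x i))) := by
  obtain ⟨a, ha⟩ := EReal.exists_coe_of_sum_lt_top (fun j => hbot j (x j)) (hf x ▸ hx)
  rw [ha]
  refine EReal.tendsto_of_tendsto_sum_of_eventually_gt (u := fun j t => g j (xs t j))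
    (fun j b hb => ?_) ?_ i
  · exact (((PiLp.continuous_apply 2 F j).tendsto x).comp hxs).eventually
      (hlsc j (x j) b (hb.trans_eq (ha j).symm))
  · simpa [hf, ha] using hfxs

variable [∀ i, InnerProductSpace ℝ (F i)]

theorem regSubdiff_apply_mem_of_eq_sum (hbot : ∀ i y, g i y ≠ ⊥)
    (hf : ∀ x, f x = ∑ i, g i (x i)) {x v : PiLp 2 F} (hv : v ∈ regSubdiff f x) (i : ι) :
    v i ∈ regSubdiff (g i) (x i) := by
  classical
  obtain ⟨hx, hreg⟩ := hv
  obtain ⟨a, ha⟩ := EReal.exists_coe_of_sum_lt_top (fun j => hbot j (x j)) (hf x ▸ hx)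
  let u : F i → PiLp 2 F := fun z => x + PiLp.single 2 i (z - x i)
  have hux : u (x i) = x := by simp [u]
  have hfu : ∀ z, f (u z) = g i z + ((∑ j ∈ Finset.univ.erase i, a j : ℝ) : EReal) := by
    intro z
    rw [hf, ← Finset.add_sum_erase _ _ (Finset.mem_univ i), EReal.coe_finset_sum]
    congr 1
    · simp [u]
    · exact Finset.sum_congr rfl fun j hj => by simp [u, Finset.ne_of_mem_erase hj, ha]
  have hfx : f x = g i (x i) + ((∑ j ∈ Finset.univ.erase i, a j : ℝ) : EReal) := by
    rw [← hfu, hux]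
  have hnorm : ∀ z, ‖u z - x‖ = ‖z - x i‖ := fun z => by simp [u, PiLp.norm_single]
  have hu : Tendsto u (𝓝 (x i)) (𝓝 x) := by
    rw [tendsto_iff_norm_sub_tendsto_zero]
    simpa [hnorm] using tendsto_iff_norm_sub_tendsto_zero.1 (tendsto_id (x := 𝓝 (x i)))
  refine ⟨ha i ▸ EReal.coe_lt_top _, fun ε hε => ?_⟩
  filter_upwards [hu.eventually (hreg ε hε)] with z hz
  have hinner : ⟪v, u z - x⟫ = ⟪v i, z - x i⟫ := by
    simp only [u, add_sub_cancel_left, PiLp.inner_apply, PiLp.ofLp_single]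
    rw [Finset.sum_eq_single i (fun j _ hj => by simp [hj]) (by simp)]
    simp
  rw [hinner, hnorm, hfu, hfx, add_right_comm] at hz
  exact (EReal.addLECancellable_coe _).add_le_add_iff_right.1 hz

theorem limSubdiff_apply_mem_of_eq_sum (hbot : ∀ i y, g i y ≠ ⊥)
    (hlsc : ∀ i, LowerSemicontinuous (g i)) (hf : ∀ x, f x = ∑ i, g i (x i))
    {x v : PiLp 2 F} (hv : v ∈ limSubdiff f x) (i : ι) : v i ∈ limSubdiff (g i) (x i) := by
  obtain ⟨hx, xs, vs, hxs, hfxs, hvs, hreg⟩ := hv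
  have hproj := PiLp.continuous_apply 2 F i
  exact ⟨EReal.ne_top_of_sum_ne_top (fun j => hbot j (x j)) (hf x ▸ hx.ne) i |>.lt_top,
    fun t => xs t i, fun t => vs t i, (hproj.tendsto x).comp hxs,
    tendsto_apply_of_eq_sum hbot hlsc hf hx hxs hfxs i, (hproj.tendsto v).comp hvs,
    fun t => regSubdiff_apply_mem_of_eq_sum hbot hf (hreg t) i⟩

theorem infEDist_limSubdiff_apply_le_of_eq_sum (hbot : ∀ i y, g i y ≠ ⊥)
    (hlsc : ∀ i, LowerSemicontinuous (g i)) (hf : ∀ x, f x = ∑ i, g i (x i))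
    (x : PiLp 2 F) (i : ι) :
    Metric.infEDist 0 (limSubdiff (g i) (x i)) ≤ Metric.infEDist 0 (limSubdiff f x) := by
  simpa using (LipschitzWith.of_edist_le fun y z => PiLp.edist_apply_le y z i).infEDist_le
    (fun _ hv => limSubdiff_apply_mem_of_eq_sum hbot hlsc hf hv i) 0

theorem klAt_of_eq_sum [Nonempty ι] (hbot : ∀ i y, g i y ≠ ⊥)
    (hlsc : ∀ i, LowerSemicontinuous (g i)) (hf : ∀ x, f x = ∑ i, g i (x i))
    {xbar : PiLp 2 F} (hxbar : f xbar < ⊤) {α : ℝ} (hα : 0 ≤ α)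
    (hKL : ∀ i, ∃ c > 0, ∀ᶠ y in 𝓝[subdiffDom (g i)] xbar i, g i (xbar i) < g i y →
      ENNReal.ofReal (c * (g i y - g i (xbar i)).toReal ^ α) ≤
        Metric.infEDist 0 (limSubdiff (g i) y)) :
    KLAt f xbar α := by
  choose c hc hev using hKL
  obtain ⟨i₀, hi₀⟩ := Finite.exists_min c
  obtain ⟨a, ha⟩ := EReal.exists_coe_of_sum_lt_top (fun i => hbot i (xbar i)) (hf xbar ▸ hxbar)
  have hN : (0 : ℝ) < Fintype.card ι := by exact_mod_cast Fintype.card_pos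
  have hc₀ : 0 < c i₀ / (Fintype.card ι : ℝ) ^ α := div_pos (hc i₀) (Real.rpow_pos_of_pos hN α)
  refine klAt_of_eventually hc₀ ?_
  have hblocks : ∀ i, ∀ᶠ x in 𝓝 xbar, x i ∈ subdiffDom (g i) → g i (xbar i) < g i (x i) →
      ENNReal.ofReal (c i * (g i (x i) - g i (xbar i)).toReal ^ α) ≤
        Metric.infEDist 0 (limSubdiff (g i) (x i)) := fun i =>
    ((PiLp.continuous_apply 2 F i).tendsto xbar).eventually (eventually_nhdsWithin_iff.1 (hev i))
  filter_upwards [eventually_all.2 hblocks] with x hx hlt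
  rcases (limSubdiff f x).eq_empty_or_nonempty with hempty | ⟨v, hv⟩
  · simp [hempty]
  obtain ⟨b, hb⟩ := EReal.exists_coe_of_sum_lt_top (fun i => hbot i (x i)) (hf x ▸ hv.1)
  simp only [hf, ha, hb, ← EReal.coe_finset_sum, ← EReal.coe_sub, EReal.toReal_coe,
    EReal.coe_lt_coe_iff] at hlt hx ⊢
  rw [← sub_pos, ← Finset.sum_sub_distrib] at hlt
  rw [← Finset.sum_sub_distrib]
  obtain ⟨i, hpos, htotal⟩ := exists_pos_and_sum_le_card_mul hlt
  calc ENNReal.ofReal (c i₀ / (Fintype.card ι : ℝ) ^ α * (∑ j, (b j - a j)) ^ α)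
      ≤ ENNReal.ofReal (c i * (b i - a i) ^ α) := by
        gcongr ENNReal.ofReal ?_
        calc c i₀ / (Fintype.card ι : ℝ) ^ α * (∑ j, (b j - a j)) ^ α
            ≤ c i₀ / (Fintype.card ι : ℝ) ^ α * (Fintype.card ι * (b i - a i)) ^ α := by
              gcongr
          _ = c i₀ * (b i - a i) ^ α := by
              rw [Real.mul_rpow hN.le hpos.le]
              field_simp
          _ ≤ c i * (b i - a i) ^ α := by gcongr; exact hi₀ i
    _ ≤ Metric.infEDist 0 (limSubdiff (g i) (x i)) :=
        hx i ⟨v i, limSubdiff_apply_mem_of_eq_sum hbot hlsc hf hv i⟩ (by linarith)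
    _ ≤ Metric.infEDist 0 (limSubdiff f x) :=
        infEDist_limSubdiff_apply_le_of_eq_sum hbot hlsc hf x i

end SeparableSum

theorem stmt_4_general {m : ℕ} (nn : Fin m → ℕ)
    (g : ∀ i : Fin m, EuclideanSpace ℝ (Fin (nn i)) → EReal)
    (hproper : ∀ i, ProperFn (g i)) (hclosed : ∀ i, LowerSemicontinuous (g i))
    (f : PiLp 2 (fun i : Fin m => EuclideanSpace ℝ (Fin (nn i))) → EReal)
    (hf : ∀ x, f x = ∑ i, g i (x i))
    (α : Fin m → ℝ) (hα : ∀ i, 0 < α i ∧ α i < 1)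
    (hKL : ∀ i, IsKL (g i) (α i))
    (hcont : ∀ i, ContinuousOn (g i) (subdiffDom (g i)))
    (αmax : ℝ) (hmax1 : ∃ i, αmax = α i) (hmax2 : ∀ i, α i ≤ αmax) :
    IsKL f αmax := by
  obtain ⟨i₀, hi₀⟩ := hmax1
  have : Nonempty (Fin m) := ⟨i₀⟩
  have hbot : ∀ i y, g i y ≠ ⊥ := fun i => (hproper i).1
  rintro xbar ⟨v, hv⟩
  have hsub : ∀ i, v i ∈ limSubdiff (g i) (xbar i) :=
    limSubdiff_apply_mem_of_eq_sum hbot hclosed hf hv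
  exact klAt_of_eq_sum hbot hclosed hf hv.1 (hi₀ ▸ (hα i₀).1.le) fun i =>
    (hKL i _ ⟨_, hsub i⟩).eventually_of_continuousWithinAt (hmax2 i)
      (hcont i _ ⟨_, hsub i⟩) (hsub i).1.ne (hbot i _)

/-- KL exponent for block separable sums of KL functions. -/
theorem stmt_4 {m n : ℕ} (hm : 0 < m) (nn : Fin m → ℕ) (hn : ∑ i, nn i = n)
    (g : ∀ i : Fin m, EuclideanSpace ℝ (Fin (nn i)) → EReal)
    (hproper : ∀ i, ProperFn (g i)) (hclosed : ∀ i, LowerSemicontinuous (g i))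
    (f : PiLp 2 (fun i : Fin m => EuclideanSpace ℝ (Fin (nn i))) → EReal)
    (hf : ∀ x, f x = ∑ i, g i (x i))
    (α : Fin m → ℝ) (hα : ∀ i, 0 < α i ∧ α i < 1)
    (hKL : ∀ i, IsKL (g i) (α i))
    (hcont : ∀ i, ContinuousOn (g i) (subdiffDom (g i)))
    (αmax : ℝ) (hmax1 : ∃ i, αmax = α i) (hmax2 : ∀ i, α i ≤ αmax) :
    IsKL f αmax :=
  stmt_4_general nn g hproper hclosed f hf α hα hKL hcont αmax hmax1 hmax2

end
end

section
/- Let f : ℝ^n → (−∞,∞] be a proper closed convex function that is a KL function with exponent α ∈ (0, 2/3) and is continuous on dom ∂f. Fix λ > 0 and define the Moreau envelope F_λ(x) := inf_{y∈ℝ^n} { f(y) + (1/(2λ))‖y − x‖² }. Then F_λ is a KL function with exponent max{1/2, α/(2−2α)} < 1. -/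
open Filter Topology Metric Set
open scoped RealInnerProductSpace

noncomputable section

variable {E : Type*} [NormedAddCommGroup E] [InnerProductSpace ℝ E]

/-!
The envelope `F` is finite and convex, and at each `x` it is touched from above by the quadratic
`y ↦ f p + ‖p - y‖² / (2λ)`, where `p` is the proximal point of `x`. Hence every limiting
subgradient of `F` at `x` equals `(x - p) / λ`, which is also a subgradient of `f` at `p`.
Away from the minimizers of `F`, subgradients of the convex function `F` are bounded away from
`0`, so the KL inequality holds there with any exponent. At a minimizer `x̄` of `F`, `x̄` is its
own proximal point and minimizes `f`, and `F x - F x̄ = s + ‖p - x‖² / (2λ)` with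
`s = f p - f x̄`. If the quadratic term dominates,
`(F x - F x̄)^θ ≲ ‖p - x‖^(2θ) ≤ ‖p - x‖` because `θ ≥ 1/2`; otherwise the KL inequality of `f`
at `p` bounds `s^θ ≤ s^α` by `‖x - p‖ / λ` because `θ ≥ α`. Finally
`max (1/2) (α/(2-2α)) ≥ max (1/2) α`.
-/

theorem LowerSemicontinuous.exists_forall_le_of_forall_le_outside {α β : Type*}
    [PseudoMetricSpace α] [ProperSpace α] [LinearOrder β] [TopologicalSpace β]
    {h : α → β} (hh : LowerSemicontinuous h) {c y₀ : α} {R : ℝ} (hy₀ : dist y₀ c ≤ R)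
    (hout : ∀ y, R < dist y c → h y₀ ≤ h y) : ∃ p, ∀ y, h p ≤ h y := by
  obtain ⟨p, -, hp⟩ :=
    (hh.lowerSemicontinuousOn _).exists_isMinOn ⟨y₀, hy₀⟩ (isCompact_closedBall c R)
  refine ⟨p, fun y => ?_⟩
  by_cases hy : dist y c ≤ R
  · exact hp hy
  · exact (hp hy₀).trans (hout y (not_le.mp hy))

theorem EConvex.apply_combo_le {f : E → EReal} (hf : EConvex f) {u v : E} {a b s t : ℝ}
    (hu : f u ≤ a) (hv : f v ≤ b) (hs : 0 ≤ s) (ht : 0 ≤ t) (hst : s + t = 1) :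
    f (s • u + t • v) ≤ ((s * a + t * b : ℝ) : EReal) := by
  simpa using hf (x := (u, a)) (y := (v, b)) hu hv hs ht hst

theorem EConvex.exists_affine_minorant {f : E → EReal} (hconv : EConvex f)
    (hproper : ProperFn f) (hclosed : LowerSemicontinuous f) :
    ∃ (L : E →L[ℝ] ℝ) (b : ℝ), ∀ y, ((L y + b : ℝ) : EReal) ≤ f y := by
  obtain ⟨x₀, hx₀⟩ := hproper.2
  lift f x₀ to ℝ using ⟨hx₀.ne, hproper.1 x₀⟩ with t₀ ht₀
  have hclosed' : IsClosed {p : E × ℝ | f p.1 ≤ (p.2 : EReal)} :=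
    hclosed.isClosed_epigraph.preimage
      (continuous_fst.prodMk (continuous_coe_real_ereal.comp continuous_snd))
  have hbelow : (x₀, t₀ - 1) ∉ {p : E × ℝ | f p.1 ≤ (p.2 : EReal)} := by
    show ¬ f x₀ ≤ ((t₀ - 1 : ℝ) : EReal)
    rw [← ht₀, EReal.coe_le_coe_iff]
    linarith
  obtain ⟨l, u, hlS, hlz⟩ := geometric_hahn_banach_closed_point hconv hclosed' hbelow
  have hsplit : ∀ y r, l (y, r) = l (y, 0) + r * l (0, 1) := fun y r => by
    rw [← smul_eq_mul, ← map_smul, ← map_add, Prod.smul_mk, Prod.mk_add_mk, smul_zero,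
      add_zero, smul_eq_mul, mul_one, zero_add]
  have hβ : l (0, 1) < 0 := by
    have := hlS (x₀, t₀) (by simp [← ht₀])
    rw [hsplit] at this hlz
    linarith
  refine ⟨(-(l (0, 1))⁻¹) • l.comp (ContinuousLinearMap.inl ℝ E ℝ), u / l (0, 1),
    fun y => ?_⟩
  induction hfy : f y with
  | bot => exact absurd hfy (hproper.1 y)
  | top => exact le_top
  | coe r =>
    have hy := hlS (y, r) (by simp [hfy])
    rw [hsplit] at hy
    simp only [smul_apply, ContinuousLinearMap.comp_apply,
      ContinuousLinearMap.inl_apply, smul_eq_mul, EReal.coe_le_coe_iff]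
    rw [neg_mul, ← div_eq_inv_mul, ← sub_eq_neg_add, div_sub_div_same, div_le_iff_of_neg hβ]
    linarith

theorem EConvex.exists_forall_le_add_sq [ProperSpace E] {f : E → EReal} (hconv : EConvex f)
    (hproper : ProperFn f) (hclosed : LowerSemicontinuous f) {q : ℝ} (hq : 0 < q) (x : E) :
    ∃ p, f p < ⊤ ∧
      ∀ y, f p + ((q * ‖p - x‖ ^ 2 : ℝ) : EReal) ≤ f y + ((q * ‖y - x‖ ^ 2 : ℝ) : EReal) := by
  obtain ⟨L, b, hLb⟩ := hconv.exists_affine_minorant hproper hclosed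
  obtain ⟨y₀, hy₀⟩ := hproper.2
  lift f y₀ to ℝ using ⟨hy₀.ne, hproper.1 y₀⟩ with a₀ ha₀
  set h : E → EReal := fun y => f y + ((q * ‖y - x‖ ^ 2 : ℝ) : EReal)
  have hh : LowerSemicontinuous h :=
    hclosed.add' (continuous_coe_real_ereal.comp (by fun_prop)).lowerSemicontinuous
      fun z => EReal.continuousAt_add (Or.inr (EReal.coe_ne_bot _)) (Or.inl (hproper.1 z))
  -- beyond radius `R` the quadratic term beats the affine minorant
  set K := a₀ + q * ‖y₀ - x‖ ^ 2 - b - L x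
  set R := max ‖y₀ - x‖ (max ((‖L‖ + 1) / q) |K|)
  have hout : ∀ y, R < dist y x → h y₀ ≤ h y := by
    intro y hy
    rw [dist_eq_norm] at hy
    have hR : max ((‖L‖ + 1) / q) |K| < ‖y - x‖ := (le_max_right _ _).trans_lt hy
    have hr₁ : (‖L‖ + 1) / q < ‖y - x‖ := (le_max_left _ _).trans_lt hR
    have hr₂ : |K| < ‖y - x‖ := (le_max_right _ _).trans_lt hR
    have hLy : L x - ‖L‖ * ‖y - x‖ ≤ L y := by
      have := (le_abs_self _).trans ((L.le_opNorm (x - y)).trans_eq' (Real.norm_eq_abs _).symm)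
      rw [map_sub, norm_sub_rev] at this
      linarith
    have hquad : (‖L‖ + 1) * ‖y - x‖ ≤ q * ‖y - x‖ ^ 2 := by
      rw [div_lt_iff₀ hq] at hr₁
      nlinarith [norm_nonneg (y - x)]
    calc h y₀ = ((a₀ + q * ‖y₀ - x‖ ^ 2 : ℝ) : EReal) := by
          simp only [h, ← ha₀, EReal.coe_add]
      _ ≤ ((L y + b + q * ‖y - x‖ ^ 2 : ℝ) : EReal) := by
        rw [EReal.coe_le_coe_iff]; nlinarith [le_abs_self K]
      _ ≤ h y := by rw [EReal.coe_add]; exact add_le_add_left (hLb y) _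
  obtain ⟨p, hp⟩ := hh.exists_forall_le_of_forall_le_outside
    (by rw [dist_eq_norm]; exact le_max_left _ _) hout
  refine ⟨p, ?_, hp⟩
  by_contra hpt
  have := hp y₀
  simp only [h, not_lt_top_iff.mp hpt, ← ha₀, EReal.top_add_coe, top_le_iff] at this
  exact EReal.coe_ne_top _ (by rw [← this, EReal.coe_add])

theorem mem_regSubdiff_of_forall_le {f : E → EReal} {p v : E} {a c : ℝ} (hc : 0 ≤ c)
    (hp : f p = a) (h : ∀ z, ((a + ⟪v, z - p⟫ - c * ‖z - p‖ ^ 2 : ℝ) : EReal) ≤ f z) :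
    v ∈ regSubdiff f p := by
  refine ⟨hp ▸ EReal.coe_lt_top a, fun ε hε => ?_⟩
  filter_upwards [closedBall_mem_nhds p (by positivity : 0 < ε / (c + 1))] with z hz
  rw [mem_closedBall, dist_eq_norm] at hz
  refine le_trans ?_ (h z)
  rw [hp, ← EReal.coe_add, EReal.coe_le_coe_iff]
  have : c * ‖z - p‖ ≤ ε := by
    calc c * ‖z - p‖ ≤ (c + 1) * (ε / (c + 1)) := by gcongr; linarith
      _ = ε := by field_simp
  nlinarith [norm_nonneg (z - p)]

theorem mem_limSubdiff_of_mem_regSubdiff {f : E → EReal} {p v : E} (hv : v ∈ regSubdiff f p) :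
    v ∈ limSubdiff f p :=
  ⟨hv.1, fun _ => p, fun _ => v, tendsto_const_nhds, tendsto_const_nhds, tendsto_const_nhds,
    fun _ => hv⟩

theorem ConvexOn.add_inner_le_of_mem_regSubdiff {g : E → ℝ} (hg : ConvexOn ℝ univ g) {x v : E}
    (hv : v ∈ regSubdiff (fun z => (g z : EReal)) x) (y : E) : g x + ⟪v, y - x⟫ ≤ g y := by
  suffices h : ∀ ε > 0, ⟪v, y - x⟫ - ε * ‖y - x‖ ≤ g y - g x by
    refine le_of_forall_pos_le_add fun δ hδ => ?_
    have := h (δ / (‖y - x‖ + 1)) (by positivity)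
    have : δ / (‖y - x‖ + 1) * ‖y - x‖ ≤ δ := by
      rw [div_mul_eq_mul_div, div_le_iff₀ (by positivity)]; nlinarith [norm_nonneg (y - x)]
    linarith
  intro ε hε
  have hseg : Tendsto (fun t : ℝ => x + t • (y - x)) (𝓝[>] 0) (𝓝 x) := by
    have : Continuous (fun t : ℝ => x + t • (y - x)) := by fun_prop
    simpa using (this.tendsto 0).mono_left nhdsWithin_le_nhds
  obtain ⟨t, hreg, ht₀, ht₁⟩ :=
    ((hseg.eventually (hv.2 ε hε)).and (Ioo_mem_nhdsGT one_pos)).exists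
  have hcvx := hg.2 (mem_univ x) (mem_univ y) (by linarith : 0 ≤ 1 - t) ht₀.le (by ring)
  rw [← EReal.coe_add, EReal.coe_le_coe_iff, add_sub_cancel_left, real_inner_smul_right,
    norm_smul, Real.norm_of_nonneg ht₀.le] at hreg
  rw [smul_eq_mul, smul_eq_mul, show (1 - t) • x + t • y = x + t • (y - x) by module] at hcvx
  have : t * (⟪v, y - x⟫ - ε * ‖y - x‖) ≤ t * (g y - g x) := by nlinarith
  exact le_of_mul_le_mul_left this ht₀

theorem ConvexOn.add_inner_le_of_mem_limSubdiff {g : E → ℝ} (hg : ConvexOn ℝ univ g) {x w : E}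
    (hw : w ∈ limSubdiff (fun z => (g z : EReal)) x) (y : E) : g x + ⟪w, y - x⟫ ≤ g y := by
  obtain ⟨-, xs, vs, hxs, hgxs, hvs, hreg⟩ := hw
  have hlim :
      Tendsto (fun t => g (xs t) + ⟪vs t, y - xs t⟫) atTop (𝓝 (g x + ⟪w, y - x⟫)) :=
    (EReal.tendsto_coe.mp hgxs).add (hvs.inner (tendsto_const_nhds.sub hxs))
  exact le_of_tendsto hlim
    (Eventually.of_forall fun t => hg.add_inner_le_of_mem_regSubdiff (hreg t) y)

theorem eq_zero_of_forall_inner_le_mul_norm_sq {u : E} {c : ℝ} (hc : 0 < c)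
    (h : ∀ d, ⟪u, d⟫ ≤ c * ‖d‖ ^ 2) : u = 0 := by
  have hu := h ((2 * c)⁻¹ • u)
  rw [real_inner_smul_right, real_inner_self_eq_norm_sq, norm_smul, mul_pow,
    Real.norm_of_nonneg (by positivity)] at hu
  have : c * ((2 * c)⁻¹ ^ 2 * ‖u‖ ^ 2) = (2 * c)⁻¹ * ‖u‖ ^ 2 / 2 := by field_simp
  have : ‖u‖ ^ 2 ≤ 0 := by
    have h2c : 0 < (2 * c)⁻¹ := by positivity
    nlinarith
  simpa using this

theorem KLAt.exists_real {f : E → EReal} {xbar : E} {α m : ℝ} (h : KLAt f xbar α)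
    (hm : f xbar = m) :
    ∃ c > (0 : ℝ), ∃ ε > (0 : ℝ), ∃ ν > (0 : ℝ), ∀ x (a : ℝ), ‖x - xbar‖ ≤ ε →
      f x = a → m < a → a < m + ν → ∀ v ∈ limSubdiff f x, c * (a - m) ^ α ≤ ‖v‖ := by
  obtain ⟨c, hc, ε, hε, ν, hν, hKL⟩ := h
  obtain ⟨ν', hν'₀, hν'⟩ := EReal.lt_iff_exists_real_btwn.mp hν
  refine ⟨c, hc, ε, hε, ν', EReal.coe_pos.mp hν'₀, fun x a hx hxa hma haν v hv => ?_⟩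
  have hKLx := hKL x hx (by rw [hm, hxa]; exact_mod_cast hma) <| by
    rw [hm, hxa]
    exact (EReal.coe_lt_coe_iff.mpr haν).trans_le (by rw [EReal.coe_add]; gcongr)
  rw [hxa, hm, ← EReal.coe_sub, EReal.toReal_coe] at hKLx
  have hdist := hKLx.trans (Metric.infEDist_le_edist_of_mem hv)
  rwa [edist_dist, dist_zero_left, ENNReal.ofReal_le_ofReal_iff (norm_nonneg v)] at hdist

theorem klAt_coe_of_forall {g : E → ℝ} {xbar : E} {θ c ε ν : ℝ} (hc : 0 < c) (hε : 0 < ε)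
    (hν : 0 < ν) (h : ∀ x, ‖x - xbar‖ ≤ ε → g xbar < g x → g x < g xbar + ν →
      ∀ v ∈ limSubdiff (fun z => (g z : EReal)) x, c * (g x - g xbar) ^ θ ≤ ‖v‖) :
    KLAt (fun z => (g z : EReal)) xbar θ := by
  refine ⟨c, hc, ε, hε, ν, EReal.coe_pos.mpr hν, fun x hx hlt hltν => ?_⟩
  rw [EReal.coe_lt_coe_iff] at hlt
  rw [← EReal.coe_add, EReal.coe_lt_coe_iff] at hltν
  rw [← EReal.coe_sub, EReal.toReal_coe]
  refine Metric.le_infEDist.mpr fun v hv => ?_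
  rw [edist_dist, dist_zero_left]
  exact ENNReal.ofReal_le_ofReal (h x hx hlt hltν v hv)

theorem ConvexOn.klAt_of_lt {g : E → ℝ} (hg : ConvexOn ℝ univ g) {xbar y : E} {θ : ℝ}
    (hθ : 0 ≤ θ) (hy : g y < g xbar) : KLAt (fun z => (g z : EReal)) xbar θ := by
  set M := ‖y - xbar‖ + 1
  refine klAt_coe_of_forall (div_pos (sub_pos.mpr hy) (by positivity : 0 < M)) one_pos one_pos
    fun x hx hlt hltν w hw => ?_
  have hsub := hg.add_inner_le_of_mem_limSubdiff hw y
  have hxy : ‖x - y‖ ≤ M := by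
    calc ‖x - y‖ = ‖(x - xbar) - (y - xbar)‖ := by rw [sub_sub_sub_cancel_right]
      _ ≤ ‖x - xbar‖ + ‖y - xbar‖ := norm_sub_le _ _
      _ ≤ M := by linarith
  have hgap : g xbar - g y ≤ ‖w‖ * M := by
    have hinner : ⟪w, y - x⟫ = -⟪w, x - y⟫ := by rw [← inner_neg_right, neg_sub]
    nlinarith [real_inner_le_norm w (x - y), mul_le_mul_of_nonneg_left hxy (norm_nonneg w)]
  calc (g xbar - g y) / M * (g x - g xbar) ^ θ ≤ (g xbar - g y) / M * 1 := by
        gcongr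
        exact Real.rpow_le_one (by linarith) (by linarith) hθ
    _ ≤ ‖w‖ := by rw [mul_one, div_le_iff₀ (by positivity)]; exact hgap

/-- Here `s` is the gap `f p - min f` at the proximal point `p` of `x`, `r = ‖p - x‖` and
`q = 1 / (2λ)`, so that `s + q r²` is the gap of the envelope at `x` and `2 q r` the norm of its
subgradient there. -/
theorem mul_rpow_add_mul_sq_le {α θ q s r c : ℝ} (hq : 0 < q) (hc : 0 < c) (hθ : 1 / 2 ≤ θ)
    (hαθ : α ≤ θ) (hs₀ : 0 ≤ s) (hs₁ : s ≤ 1) (hr₀ : 0 ≤ r) (hr₁ : r ≤ 1)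
    (hkl : 0 < s → c * s ^ α ≤ 2 * q * r) :
    min (2 * q) c / (1 + q) ^ θ * (s + q * r ^ 2) ^ θ ≤ 2 * q * r := by
  have hθ₀ : 0 < θ := by linarith
  have hκ : 0 < (1 + q) ^ θ := by positivity
  rcases le_total s (r ^ 2) with hsr | hrs
  · -- the quadratic term dominates, and `r ^ (2θ) ≤ r` since `2θ ≥ 1`
    have h1 : (s + q * r ^ 2) ^ θ ≤ (1 + q) ^ θ * r := by
      calc (s + q * r ^ 2) ^ θ ≤ ((1 + q) * r ^ 2) ^ θ := by gcongr; linarith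
        _ = (1 + q) ^ θ * r ^ (2 * θ) := by
          rw [Real.mul_rpow (by linarith) (by positivity), ← Real.rpow_natCast,
            ← Real.rpow_mul hr₀, Nat.cast_ofNat]
        _ ≤ (1 + q) ^ θ * r := by
          gcongr
          simpa using Real.rpow_le_rpow_of_exponent_ge' hr₀ hr₁ zero_le_one (by linarith)
    calc min (2 * q) c / (1 + q) ^ θ * (s + q * r ^ 2) ^ θ
        ≤ 2 * q / (1 + q) ^ θ * ((1 + q) ^ θ * r) := by gcongr; exact min_le_left _ _
      _ = 2 * q * r := by field_simp
  · -- the gap of `f` dominates, and the KL inequality of `f` applies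
    rcases hs₀.eq_or_lt with rfl | hs
    · have hr : r = 0 := by nlinarith
      simp [hr, Real.zero_rpow hθ₀.ne']
    have h1 : (s + q * r ^ 2) ^ θ ≤ (1 + q) ^ θ * s ^ α := by
      calc (s + q * r ^ 2) ^ θ ≤ ((1 + q) * s) ^ θ := by gcongr; nlinarith
        _ = (1 + q) ^ θ * s ^ θ := Real.mul_rpow (by linarith) hs₀
        _ ≤ (1 + q) ^ θ * s ^ α :=
          mul_le_mul_of_nonneg_left (Real.rpow_le_rpow_of_exponent_ge hs hs₁ hαθ) hκ.le
    calc min (2 * q) c / (1 + q) ^ θ * (s + q * r ^ 2) ^ θ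
        ≤ c / (1 + q) ^ θ * ((1 + q) ^ θ * s ^ α) := by gcongr; exact min_le_right _ _
      _ = c * s ^ α := by field_simp
      _ ≤ 2 * q * r := hkl hs

section MoreauEnvelope

variable {V : Type*} [NormedAddCommGroup V] {f : V → EReal} {lam : ℝ}

def moreauEnvelope (f : V → EReal) (lam : ℝ) (x : V) : EReal :=
  ⨅ y, f y + ((1 / (2 * lam) * ‖y - x‖ ^ 2 : ℝ) : EReal)

theorem moreauEnvelope_le_add (x y : V) :
    moreauEnvelope f lam x ≤ f y + ((1 / (2 * lam) * ‖y - x‖ ^ 2 : ℝ) : EReal) :=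
  iInf_le _ y

theorem moreauEnvelope_le (x : V) : moreauEnvelope f lam x ≤ f x := by
  simpa using moreauEnvelope_le_add (f := f) (lam := lam) x x

theorem le_add_of_moreauEnvelope_eq {x z : V} {gx a : ℝ} (hg : moreauEnvelope f lam x = gx)
    (hz : f z ≤ a) : gx ≤ a + 1 / (2 * lam) * ‖z - x‖ ^ 2 := by
  have := (moreauEnvelope_le_add (f := f) (lam := lam) x z).trans (add_le_add_left hz _)
  rwa [hg, ← EReal.coe_add, EReal.coe_le_coe_iff] at this

theorem apply_eq_of_isMin_moreauEnvelope (hlam : 0 < lam)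
    {g : V → ℝ} (hg : ∀ x, moreauEnvelope f lam x = g x) {xbar p : V}
    (hp : f p = ((g xbar - 1 / (2 * lam) * ‖p - xbar‖ ^ 2 : ℝ) : EReal))
    (hmin : ∀ y, g xbar ≤ g y) : f xbar = g xbar := by
  have hgp := le_add_of_moreauEnvelope_eq (hg p) hp.le
  have hq : 0 < 1 / (2 * lam) := by positivity
  have hpx : ‖p - xbar‖ ^ 2 ≤ 0 := by
    rw [sub_self, norm_zero] at hgp
    nlinarith [hmin p]
  obtain rfl : p = xbar := by simpa [sub_eq_zero] using hpx
  simpa using hp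

end MoreauEnvelope

section ConvexMoreauEnvelope

variable {f : E → EReal} {lam : ℝ}

theorem exists_moreauEnvelope_eq [ProperSpace E] (hproper : ProperFn f)
    (hclosed : LowerSemicontinuous f) (hconv : EConvex f) (hlam : 0 < lam) (x : E) :
    ∃ (p : E) (a : ℝ), f p = a ∧
      moreauEnvelope f lam x = ((a + 1 / (2 * lam) * ‖p - x‖ ^ 2 : ℝ) : EReal) := by
  obtain ⟨p, hp, hmin⟩ :=
    hconv.exists_forall_le_add_sq hproper hclosed (q := 1 / (2 * lam)) (by positivity) x
  lift f p to ℝ using ⟨hp.ne, hproper.1 p⟩ with a ha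
  refine ⟨p, a, ha.symm, le_antisymm ?_ (le_iInf fun y => ?_)⟩
  · exact (moreauEnvelope_le_add x p).trans_eq (by rw [← ha, EReal.coe_add])
  · rw [EReal.coe_add]; exact hmin y

variable {g : E → ℝ}

theorem convexOn_of_moreauEnvelope_eq (hconv : EConvex f) (hlam : 0 ≤ lam)
    (hg : ∀ x, moreauEnvelope f lam x = g x)
    (hprox : ∀ x, ∃ p, f p = ((g x - 1 / (2 * lam) * ‖p - x‖ ^ 2 : ℝ) : EReal)) :
    ConvexOn ℝ univ g := by
  refine ⟨convex_univ, fun x₁ _ x₂ _ a b ha hb hab => ?_⟩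
  obtain ⟨p₁, hp₁⟩ := hprox x₁
  obtain ⟨p₂, hp₂⟩ := hprox x₂
  have hf := hconv.apply_combo_le hp₁.le hp₂.le ha hb hab
  have hsq : ‖(a • p₁ + b • p₂) - (a • x₁ + b • x₂)‖ ^ 2
      ≤ a * ‖p₁ - x₁‖ ^ 2 + b * ‖p₂ - x₂‖ ^ 2 := by
    have := (convexOn_univ_norm.pow (fun _ _ => norm_nonneg _) 2).2 (mem_univ (p₁ - x₁))
      (mem_univ (p₂ - x₂)) ha hb hab
    simp only [Pi.pow_apply, smul_eq_mul] at this
    rw [show (a • p₁ + b • p₂) - (a • x₁ + b • x₂) = a • (p₁ - x₁) + b • (p₂ - x₂) by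
      module]
    exact this
  have hcomb := le_add_of_moreauEnvelope_eq (hg (a • x₁ + b • x₂)) hf
  have hq : 0 ≤ 1 / (2 * lam) := by positivity
  simp only [smul_eq_mul]
  nlinarith [mul_le_mul_of_nonneg_left hsq hq]

theorem smul_sub_mem_regSubdiff_of_moreauEnvelope_eq (hlam : 0 < lam) {x p : E} {gx : ℝ}
    (hg : moreauEnvelope f lam x = gx)
    (hp : f p = ((gx - 1 / (2 * lam) * ‖p - x‖ ^ 2 : ℝ) : EReal)) :
    lam⁻¹ • (x - p) ∈ regSubdiff f p := by
  refine mem_regSubdiff_of_forall_le (c := 1 / (2 * lam)) (by positivity) hp fun z => ?_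
  have := EReal.sub_le_of_le_add ((moreauEnvelope_le_add x z).trans_eq' hg)
  refine le_trans (le_of_eq ?_) this
  rw [← EReal.coe_sub, EReal.coe_eq_coe_iff, real_inner_smul_left,
    show z - x = (z - p) - (x - p) by abel, norm_sub_sq_real (z - p), norm_sub_rev p x,
    real_inner_comm]
  field_simp
  ring

theorem eq_smul_sub_of_mem_limSubdiff (hlam : 0 < lam) (hg : ∀ x, moreauEnvelope f lam x = g x)
    (hgc : ConvexOn ℝ univ g) {x p w : E}
    (hp : f p = ((g x - 1 / (2 * lam) * ‖p - x‖ ^ 2 : ℝ) : EReal))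
    (hw : w ∈ limSubdiff (fun z => (g z : EReal)) x) :
    w = lam⁻¹ • (x - p) := by
  rw [← sub_eq_zero]
  refine eq_zero_of_forall_inner_le_mul_norm_sq (c := 1 / (2 * lam)) (by positivity) fun d => ?_
  have hsub := hgc.add_inner_le_of_mem_limSubdiff hw (x + d)
  have hmaj := le_add_of_moreauEnvelope_eq (hg (x + d)) hp.le
  rw [add_sub_cancel_left] at hsub
  rw [show p - (x + d) = (p - x) - d by abel, norm_sub_sq_real (p - x)] at hmaj
  rw [inner_sub_left, real_inner_smul_left, ← neg_sub p x, inner_neg_left]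
  have : lam⁻¹ = 2 * (1 / (2 * lam)) := by field_simp
  rw [this]
  nlinarith

theorem klAt_of_isMin_moreauEnvelope {α θ : ℝ} (hlam : 0 < lam)
    (hg : ∀ x, moreauEnvelope f lam x = g x) (hgc : ConvexOn ℝ univ g)
    (hprox : ∀ x, ∃ p, f p = ((g x - 1 / (2 * lam) * ‖p - x‖ ^ 2 : ℝ) : EReal))
    (hθ : 1 / 2 ≤ θ) (hαθ : α ≤ θ) {xbar : E} (hmin : ∀ y, g xbar ≤ g y)
    (hfx : f xbar = g xbar) (hKL : KLAt f xbar α) : KLAt (fun z => (g z : EReal)) xbar θ := by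
  set q := 1 / (2 * lam) with hq_def
  have hq : 0 < q := by positivity
  obtain ⟨cf, hcf, εf, hεf, νf, hνf, hKLf⟩ := hKL.exists_real hfx
  refine klAt_coe_of_forall (c := min (2 * q) cf / (1 + q) ^ θ) (ε := εf / 2)
    (ν := min (min 1 q) (min νf (q * (εf / 2) ^ 2))) (by positivity) (by positivity)
    (by positivity) fun x hx hlt hltν w hw => ?_
  obtain ⟨p, hp⟩ := hprox x
  have hnorm : ‖lam⁻¹ • (x - p)‖ = 2 * q * ‖p - x‖ := by
    rw [norm_smul, norm_inv, Real.norm_of_nonneg hlam.le, norm_sub_rev, hq_def]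
    field_simp
  set r := ‖p - x‖
  set s := g x - q * r ^ 2 - g xbar
  have hgap : g x - g xbar = s + q * r ^ 2 := by ring
  have hs₀ : 0 ≤ s := by
    have := le_add_of_moreauEnvelope_eq (hg p) hp.le
    rw [sub_self, norm_zero] at this
    linarith [hmin p]
  have hq₀ : 0 ≤ q * r ^ 2 := by positivity
  have hν : s + q * r ^ 2 < min (min 1 q) (min νf (q * (εf / 2) ^ 2)) := by linarith
  simp only [lt_min_iff] at hν
  obtain ⟨⟨hν₁, hνq⟩, hνf', hνε⟩ := hν
  have hr₁ : r < 1 := lt_of_pow_lt_pow_left₀ 2 zero_le_one (by nlinarith)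
  have hrε : r < εf / 2 := lt_of_pow_lt_pow_left₀ 2 (by positivity) (by nlinarith)
  rw [hgap, eq_smul_sub_of_mem_limSubdiff hlam hg hgc hp hw, hnorm]
  refine mul_rpow_add_mul_sq_le hq hcf hθ hαθ hs₀ (by linarith) (norm_nonneg _) hr₁.le
    fun hs => ?_
  have hpx : ‖p - xbar‖ ≤ εf := by
    calc ‖p - xbar‖ ≤ ‖p - x‖ + ‖x - xbar‖ := norm_sub_le_norm_sub_add_norm_sub _ _ _
      _ ≤ εf := by linarith
  have hv := smul_sub_mem_regSubdiff_of_moreauEnvelope_eq hlam (hg x) hp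
  have := hKLf p _ hpx hp (by linarith) (by linarith) _ (mem_limSubdiff_of_mem_regSubdiff hv)
  rwa [hnorm] at this

theorem isKL_moreauEnvelope [ProperSpace E] {α θ : ℝ} (hproper : ProperFn f)
    (hclosed : LowerSemicontinuous f) (hconv : EConvex f) (hKL : IsKL f α) (hlam : 0 < lam)
    (hθ : 1 / 2 ≤ θ) (hαθ : α ≤ θ) : IsKL (moreauEnvelope f lam) θ := by
  choose p a hpa hp using exists_moreauEnvelope_eq hproper hclosed hconv hlam
  set g : E → ℝ := fun x => a x + 1 / (2 * lam) * ‖p x - x‖ ^ 2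
  have hprox : ∀ x, f (p x) = ((g x - 1 / (2 * lam) * ‖p x - x‖ ^ 2 : ℝ) : EReal) := by
    simp [g, hpa]
  have hgc := convexOn_of_moreauEnvelope_eq hconv hlam.le hp fun x => ⟨p x, hprox x⟩
  rw [show moreauEnvelope f lam = fun x => (g x : EReal) from funext hp]
  intro xbar _
  by_cases hmin : ∀ y, g xbar ≤ g y
  · have hfx := apply_eq_of_isMin_moreauEnvelope hlam hp (hprox xbar) hmin
    have h0 : (0 : E) ∈ regSubdiff f xbar := by
      refine mem_regSubdiff_of_forall_le le_rfl hfx fun z => ?_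
      simp only [inner_zero_left, zero_mul, add_zero, sub_zero]
      exact (EReal.coe_le_coe_iff.mpr (hmin z)).trans ((hp z).symm.trans_le (moreauEnvelope_le z))
    exact klAt_of_isMin_moreauEnvelope hlam hp hgc (fun x => ⟨p x, hprox x⟩) hθ hαθ hmin hfx
      (hKL xbar ⟨0, mem_limSubdiff_of_mem_regSubdiff h0⟩)
  · obtain ⟨y, hy⟩ := not_forall.mp hmin
    exact hgc.klAt_of_lt (by linarith) (not_le.mp hy)

end ConvexMoreauEnvelope

theorem stmt_5_general {n : ℕ} (f : EuclideanSpace ℝ (Fin n) → EReal)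
    (hproper : ProperFn f) (hclosed : LowerSemicontinuous f) (hconv : EConvex f)
    (α : ℝ) (hα1 : α < 2/3) (hKL : IsKL f α)
    (lam : ℝ) (hlam : 0 < lam)
    (F : EuclideanSpace ℝ (Fin n) → EReal)
    (hF : ∀ x, F x = ⨅ y, f y + ((1/(2*lam) * ‖y - x‖^2 : ℝ) : EReal)) :
    max (1/2) (α/(2-2*α)) < 1 ∧ IsKL F (max (1/2) (α/(2-2*α))) := by
  have hαθ : α ≤ max (1/2) (α/(2-2*α)) := by
    rcases le_or_gt α (1/2) with h | h
    · exact h.trans (le_max_left _ _)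
    · exact le_max_of_le_right ((le_div_iff₀ (by linarith)).mpr (by nlinarith))
  obtain rfl : F = moreauEnvelope f lam := funext hF
  exact ⟨max_lt (by norm_num) ((div_lt_one (by linarith)).mpr (by linarith)),
    isKL_moreauEnvelope hproper hclosed hconv hKL hlam (le_max_left _ _) hαθ⟩

/-- KL exponent for the Moreau envelope of a convex KL function. -/
theorem stmt_5 {n : ℕ} (f : EuclideanSpace ℝ (Fin n) → EReal)
    (hproper : ProperFn f) (hclosed : LowerSemicontinuous f) (hconv : EConvex f)
    (α : ℝ) (hα0 : 0 < α) (hα1 : α < 2/3) (hKL : IsKL f α)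
    (hcont : ContinuousOn f (subdiffDom f))
    (lam : ℝ) (hlam : 0 < lam)
    (F : EuclideanSpace ℝ (Fin n) → EReal)
    (hF : ∀ x, F x = ⨅ y, f y + ((1/(2*lam) * ‖y - x‖^2 : ℝ) : EReal)) :
    max (1/2) (α/(2-2*α)) < 1 ∧ IsKL F (max (1/2) (α/(2-2*α))) :=
  stmt_5_general f hproper hclosed hconv α hα1 hKL lam hlam F hF
end
end

section
/- Let f : ℝ^n → (−∞,∞] be a proper closed function that has the KL property at x̄ ∈ dom ∂f with exponent α ∈ [1/2, 1), and let β > 0. Define F : ℝ^n × ℝ^n → (−∞,∞] by F(x,y) := f(x) + (β/2)‖x − y‖². Then F has the KL property at (x̄, x̄) with exponent α. -/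
/-!
A limiting subgradient `v` of `F` at `(x, y)` has the form `(u + β (x - y), β (y - x))` with
`u ∈ ∂f(x)`: the coupling term is smooth with continuous gradient, and `f` does not depend on `y`.
Split `F(x, y) - F(x̄, x̄) = (f(x) - f(x̄)) + (β/2)‖x - y‖²` and use subadditivity of `t ↦ t^α`.
When positive, the first summand is controlled by the KL inequality of `f`, since
`‖u‖ ≤ ‖v‖ + β‖x - y‖ ≤ 2‖v‖`. The second is controlled by the `y`-component alone: once the
value gap is below `1`, `((β/2)‖x - y‖²)^α ≤ ((β/2)‖x - y‖²)^(1/2) = √(β/2)‖x - y‖`, and this is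
where `α ≥ 1/2` is needed.
-/

open Filter Topology Metric Set
open scoped RealInnerProductSpace

noncomputable section

variable {E : Type*} [NormedAddCommGroup E] [InnerProductSpace ℝ E]

theorem EReal.lt_top_of_add_coe_lt_top {a : EReal} {r : ℝ} (h : a + r < ⊤) : a < ⊤ := by
  contrapose! h
  rw [top_le_iff.1 h, EReal.top_add_coe]

theorem sub_mem_regSubdiff_of_mem_regSubdiff_add {h : E → EReal} {g : E → ℝ} {x u v : E}
    (hg : HasFDerivAt g (innerSL ℝ u) x)
    (hv : v ∈ regSubdiff (fun z => h z + (g z : EReal)) x) :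
    v - u ∈ regSubdiff h x := by
  obtain ⟨hx, hv⟩ := hv
  refine ⟨EReal.lt_top_of_add_coe_lt_top hx, fun ε hε => ?_⟩
  filter_upwards [hv (ε / 2) (by positivity), hg.isLittleO.def (half_pos hε)] with z hz hgz
  rw [innerSL_apply_apply, Real.norm_eq_abs, abs_le] at hgz
  have key : h x + ((⟪v - u, z - x⟫ - ε * ‖z - x‖ : ℝ) : EReal) + (g z : EReal) ≤ h z + g z :=
    calc _ = h x + ((⟪v - u, z - x⟫ - ε * ‖z - x‖ + g z : ℝ) : EReal) := by
          rw [add_assoc, EReal.coe_add]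
      _ ≤ h x + ((g x + (⟪v, z - x⟫ - ε / 2 * ‖z - x‖) : ℝ) : EReal) := by
          refine add_le_add le_rfl (EReal.coe_le_coe_iff.2 ?_)
          rw [inner_sub_left]
          linarith
      _ ≤ h z + g z := by rwa [EReal.coe_add, ← add_assoc]
  exact (EReal.addLECancellable_coe (g z)).add_le_add_iff_right.1 key

theorem sub_mem_limSubdiff_of_mem_limSubdiff_add {h : E → EReal} {g : E → ℝ} {u : E → E}
    {x v : E} (hg : ∀ z, HasFDerivAt g (innerSL ℝ (u z)) z) (hu : Continuous u)
    (hv : v ∈ limSubdiff (fun z => h z + (g z : EReal)) x) :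
    v - u x ∈ limSubdiff h x := by
  obtain ⟨hx, xs, vs, hxs, hfxs, hvs, hreg⟩ := hv
  have hgc : Continuous g := continuous_iff_continuousAt.2 fun z => (hg z).continuousAt
  refine ⟨EReal.lt_top_of_add_coe_lt_top hx, xs, fun t => vs t - u (xs t), hxs, ?_,
    hvs.sub ((hu.tendsto x).comp hxs),
    fun t => sub_mem_regSubdiff_of_mem_regSubdiff_add (hg _) (hreg t)⟩
  have hgxs : Tendsto (fun t => ((-g (xs t) : ℝ) : EReal)) atTop (𝓝 ((-g x : ℝ) : EReal)) :=
    (continuous_coe_real_ereal.tendsto _).comp ((hgc.neg.tendsto x).comp hxs)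
  have hcancel : ∀ z, h z + (g z : EReal) + ((-g z : ℝ) : EReal) = h z := fun z => by
    rw [add_assoc, ← EReal.coe_add, add_neg_cancel, EReal.coe_zero, add_zero]
  simpa only [Function.comp_def, hcancel] using
    (EReal.continuousAt_add (Or.inr (EReal.coe_ne_bot _))
      (Or.inr (EReal.coe_ne_top _))).tendsto.comp (hfxs.prodMk_nhds hgxs)

section
variable {E' : Type*} [NormedAddCommGroup E'] [InnerProductSpace ℝ E']

theorem eq_zero_of_forall_eventually_inner_le {w y : E'}
    (h : ∀ ε > 0, ∀ᶠ z in 𝓝 y, ⟪w, z - y⟫ ≤ ε * ‖z - y‖) : w = 0 := by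
  refine norm_le_zero_iff.1 (le_of_forall_pos_le_add fun ε hε => ?_)
  have hline : Tendsto (fun t : ℝ => y + t • w) (𝓝[>] 0) (𝓝 y) := by
    have : Continuous (fun t : ℝ => y + t • w) := by fun_prop
    simpa using (this.tendsto 0).mono_left nhdsWithin_le_nhds
  obtain ⟨t, hle, ht⟩ := ((hline.eventually (h ε hε)).and self_mem_nhdsWithin).exists
  simp only [add_sub_cancel_left, inner_smul_right, real_inner_self_eq_norm_sq, norm_smul,
    Real.norm_eq_abs, abs_of_pos ht] at hle
  have hw : ‖w‖ * ‖w‖ ≤ ε * ‖w‖ := le_of_mul_le_mul_left (by nlinarith) ht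
  rcases (norm_nonneg w).eq_or_lt with h0 | hpos
  · rw [← h0]; linarith
  · linarith [le_of_mul_le_mul_right hw hpos]

theorem mem_regSubdiff_of_mem_regSubdiff_comp_fst {h : E → EReal} {p w : WithLp 2 (E × E')}
    (hp : h p.fst ≠ ⊥) (hw : w ∈ regSubdiff (fun q : WithLp 2 (E × E') => h q.fst) p) :
    w.fst ∈ regSubdiff h p.fst ∧ w.snd = 0 := by
  obtain ⟨hlt, hw⟩ := hw
  have hfst : Tendsto (fun x : E => WithLp.toLp 2 (x, p.snd)) (𝓝 p.fst) (𝓝 p) := by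
    have : Continuous (fun x : E => WithLp.toLp 2 (x, p.snd)) := by fun_prop
    exact this.tendsto p.fst
  have hsnd : Tendsto (fun y : E' => WithLp.toLp 2 (p.fst, y)) (𝓝 p.snd) (𝓝 p) := by
    have : Continuous (fun y : E' => WithLp.toLp 2 (p.fst, y)) := by fun_prop
    exact this.tendsto p.snd
  refine ⟨⟨hlt, fun ε hε => ?_⟩, eq_zero_of_forall_eventually_inner_le (y := p.snd) fun ε hε => ?_⟩
  · filter_upwards [hfst.eventually (hw ε hε)] with x hx
    simpa [WithLp.prod_norm_eq_of_L2] using hx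
  · obtain ⟨a, ha⟩ : ∃ a : ℝ, h p.fst = a := ⟨_, (EReal.coe_toReal hlt.ne hp).symm⟩
    filter_upwards [hsnd.eventually (hw ε hε)] with y hy
    simp [WithLp.prod_norm_eq_of_L2, ha] at hy
    norm_cast at hy
    linarith

theorem mem_limSubdiff_of_mem_limSubdiff_comp_fst {h : E → EReal} (hh : ∀ x, h x ≠ ⊥)
    {p w : WithLp 2 (E × E')} (hw : w ∈ limSubdiff (fun q : WithLp 2 (E × E') => h q.fst) p) :
    w.fst ∈ limSubdiff h p.fst ∧ w.snd = 0 := by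
  obtain ⟨hlt, ps, ws, hps, hhps, hws, hreg⟩ := hw
  have hreg' := fun t => mem_regSubdiff_of_mem_regSubdiff_comp_fst (hh _) (hreg t)
  refine ⟨⟨hlt, fun t => (ps t).fst, fun t => (ws t).fst,
    ((WithLp.continuous_fst _ _ _).tendsto p).comp hps, hhps,
    ((WithLp.continuous_fst _ _ _).tendsto w).comp hws,
    fun t => (hreg' t).1⟩, ?_⟩
  have hsnd : ∀ t, (ws t).snd = 0 := fun t => (hreg' t).2
  refine tendsto_nhds_unique (((WithLp.continuous_snd _ _ _).tendsto w).comp hws) ?_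
  simp only [Function.comp_def, hsnd, tendsto_const_nhds]

end

theorem hasFDerivAt_mul_norm_fst_sub_snd_sq (β : ℝ) (p : WithLp 2 (E × E)) :
    HasFDerivAt (fun q : WithLp 2 (E × E) => β / 2 * ‖q.fst - q.snd‖ ^ 2)
      (innerSL ℝ (WithLp.toLp 2 (β • (p.fst - p.snd), β • (p.snd - p.fst)))) p := by
  have hL : HasFDerivAt (fun q : WithLp 2 (E × E) => q.fst - q.snd)
      (WithLp.fstL 2 ℝ E E - WithLp.sndL 2 ℝ E E) p :=
    (WithLp.fstL 2 ℝ E E).hasFDerivAt.sub (WithLp.sndL 2 ℝ E E).hasFDerivAt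
  refine (hL.norm_sq.const_mul (β / 2)).congr_fderiv (ContinuousLinearMap.ext fun d => ?_)
  simp [inner_sub_left, inner_smul_left, real_inner_comm]
  ring

theorem rpow_add_le_max_rpow_add_sqrt {a q α : ℝ} (hq : 0 ≤ q) (hpos : 0 < a + q)
    (hle : a + q ≤ 1) (hα0 : 1 / 2 ≤ α) (hα1 : α ≤ 1) :
    (a + q) ^ α ≤ max a 0 ^ α + √q := by
  rw [Real.sqrt_eq_rpow]
  rcases le_or_gt a 0 with ha | ha
  · rw [max_eq_right ha, Real.zero_rpow (by linarith), zero_add]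
    calc (a + q) ^ α ≤ (a + q) ^ (1 / 2 : ℝ) := Real.rpow_le_rpow_of_exponent_ge hpos hle hα0
      _ ≤ q ^ (1 / 2 : ℝ) := Real.rpow_le_rpow hpos.le (by linarith) (by norm_num)
  · rw [max_eq_left ha.le]
    calc (a + q) ^ α ≤ a ^ α + q ^ α := Real.rpow_add_le_add_rpow ha.le hq (by linarith) hα1
      _ ≤ a ^ α + q ^ (1 / 2 : ℝ) :=
        add_le_add le_rfl (Real.rpow_le_rpow_of_exponent_ge' hq (by linarith) (by norm_num) hα0)

theorem min_mul_rpow_add_div_two_mul_sq_le {a r m c β α : ℝ} (hc : 0 < c) (hβ : 0 < β)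
    (hα0 : 1 / 2 ≤ α) (hα1 : α ≤ 1) (hr : 0 ≤ r) (hpos : 0 < a + β / 2 * r ^ 2)
    (hle : a + β / 2 * r ^ 2 ≤ 1)
    (hm : β * r ≤ m) (hKL : 0 < a → c * a ^ α ≤ 2 * m) :
    min (c / 4) √(β / 2) * (a + β / 2 * r ^ 2) ^ α ≤ m := by
  set k := min (c / 4) √(β / 2)
  have hsqrt : √(β / 2 * r ^ 2) = √(β / 2) * r := by
    rw [Real.sqrt_mul (by positivity), Real.sqrt_sq hr]
  have hk_sqrt : k * √(β / 2 * r ^ 2) ≤ m / 2 := by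
    rw [hsqrt, ← mul_assoc]
    calc k * √(β / 2) * r ≤ √(β / 2) * √(β / 2) * r := by gcongr; exact min_le_right _ _
      _ = β / 2 * r := by rw [Real.mul_self_sqrt (by positivity)]
      _ ≤ m / 2 := by linarith
  have hk_rpow : k * max a 0 ^ α ≤ m / 2 := by
    rcases le_or_gt a 0 with ha | ha
    · rw [max_eq_right ha, Real.zero_rpow (by linarith), mul_zero]
      linarith [mul_nonneg hβ.le hr]
    · rw [max_eq_left ha.le]
      calc k * a ^ α ≤ c / 4 * a ^ α := by gcongr; exact min_le_left _ _
        _ ≤ m / 2 := by linarith [hKL ha]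
  calc k * (a + β / 2 * r ^ 2) ^ α ≤ k * (max a 0 ^ α + √(β / 2 * r ^ 2)) :=
        mul_le_mul_of_nonneg_left (rpow_add_le_max_rpow_add_sqrt (by positivity) hpos hle hα0 hα1)
          (by positivity)
    _ ≤ m := by linarith

theorem mem_limSubdiff_of_mem_limSubdiff_add_norm_fst_sub_snd_sq {f : E → EReal}
    (hf : ∀ x, f x ≠ ⊥) {β : ℝ} {p v : WithLp 2 (E × E)}
    (hv : v ∈ limSubdiff
      (fun q : WithLp 2 (E × E) => f q.fst + ((β / 2 * ‖q.fst - q.snd‖ ^ 2 : ℝ) : EReal)) p) :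
    v.fst - β • (p.fst - p.snd) ∈ limSubdiff f p.fst ∧ v.snd = β • (p.snd - p.fst) := by
  have h := mem_limSubdiff_of_mem_limSubdiff_comp_fst hf
    (sub_mem_limSubdiff_of_mem_limSubdiff_add (hasFDerivAt_mul_norm_fst_sub_snd_sq β)
      (by fun_prop) hv)
  simpa [sub_eq_zero] using h

theorem le_norm_of_le_infEDist_zero {G : Type*} [SeminormedAddCommGroup G] {s : Set G} {u : G}
    {t : ℝ} (hu : u ∈ s) (h : ENNReal.ofReal t ≤ Metric.infEDist 0 s) : t ≤ ‖u‖ := by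
  refine (ENNReal.ofReal_le_ofReal_iff (norm_nonneg u)).1 ?_
  simpa [edist_dist] using h.trans (Metric.infEDist_le_edist_of_mem hu)

theorem KLAt.add_div_two_mul_norm_fst_sub_snd_sq {f : E → EReal} (hf : ∀ x, f x ≠ ⊥)
    {xbar : E} {α β : ℝ} (hα0 : 1 / 2 ≤ α) (hα1 : α < 1) (hβ : 0 < β) (hKL : KLAt f xbar α) :
    KLAt (fun q : WithLp 2 (E × E) => f q.fst + ((β / 2 * ‖q.fst - q.snd‖ ^ 2 : ℝ) : EReal))
      (WithLp.toLp 2 (xbar, xbar)) α := by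
  obtain ⟨c, hc, ε, hε, ν, hν, hKL⟩ := hKL
  refine ⟨min (c / 4) √(β / 2), by positivity, ε, hε, min ν 1, lt_min hν zero_lt_one,
    fun p hp hlow hupp => Metric.le_infEDist.2 fun v hv => ?_⟩
  obtain ⟨hu, hv2⟩ := mem_limSubdiff_of_mem_limSubdiff_add_norm_fst_sub_snd_sq hf hv
  simp only [WithLp.toLp_fst, WithLp.toLp_snd, sub_self, norm_zero, ne_eq,
    OfNat.ofNat_ne_zero, not_false_eq_true, zero_pow, mul_zero, EReal.coe_zero, add_zero]
    at hlow hupp ⊢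
  obtain ⟨a, ha⟩ : ∃ a : ℝ, f p.fst = a := ⟨_, (EReal.coe_toReal hu.1.ne (hf _)).symm⟩
  obtain ⟨b, hb⟩ : ∃ b : ℝ, f xbar = b :=
    ⟨_, (EReal.coe_toReal (fun h => by simp [h] at hlow) (hf _)).symm⟩
  set r := ‖p.fst - p.snd‖
  set q := β / 2 * r ^ 2
  specialize hKL p.fst
  rw [ha, hb] at hKL hlow hupp ⊢
  have hsub : ((a : EReal) + q - b).toReal = a - b + q := by
    rw [← EReal.coe_add, ← EReal.coe_sub, EReal.toReal_coe]; ring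
  have hlow' : 0 < a - b + q := by
    rw [← EReal.coe_add, EReal.coe_lt_coe_iff] at hlow; linarith
  have hupp' : (a : EReal) + q < b + ν ∧ (a : EReal) + q < b + 1 :=
    ⟨hupp.trans_le (add_le_add le_rfl (min_le_left _ _)),
      hupp.trans_le (add_le_add le_rfl (min_le_right _ _))⟩
  have hv_snd : β * r ≤ ‖v‖ := calc
    β * r = ‖v.snd‖ := by rw [hv2, norm_smul, Real.norm_of_nonneg hβ.le, norm_sub_rev]
    _ ≤ ‖v‖ := WithLp.norm_snd_le (x := v)
  have hv_fst (hab : 0 < a - b) : c * (a - b) ^ α ≤ 2 * ‖v‖ := by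
    have hx : ‖p.fst - xbar‖ ≤ ε := (WithLp.norm_fst_le (x := p - _)).trans hp
    have hax : (a : EReal) < b + ν :=
      (le_add_of_nonneg_right (EReal.coe_nonneg.2 (by positivity))).trans_lt hupp'.1
    have hab' :=
      le_norm_of_le_infEDist_zero hu (hKL hx (EReal.coe_lt_coe_iff.2 (by linarith)) hax)
    rw [← EReal.coe_sub, EReal.toReal_coe] at hab'
    have hsmul : ‖β • (p.fst - p.snd)‖ = β * r := by rw [norm_smul, Real.norm_of_nonneg hβ.le]
    linarith [norm_sub_le v.fst (β • (p.fst - p.snd)), WithLp.norm_fst_le (x := v)]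
  rw [hsub, edist_dist, dist_zero_left]
  refine ENNReal.ofReal_le_ofReal
    (min_mul_rpow_add_div_two_mul_sq_le hc hβ hα0 hα1.le (norm_nonneg _) hlow' ?_ hv_snd hv_fst)
  show a - b + q ≤ 1
  rw [← EReal.coe_add, ← EReal.coe_one, ← EReal.coe_add, EReal.coe_lt_coe_iff] at hupp'
  linarith [hupp'.2]

theorem stmt_8_general {n : ℕ} (f : EuclideanSpace ℝ (Fin n) → EReal)
    (hproper : ProperFn f)
    (xbar : EuclideanSpace ℝ (Fin n))
    (α : ℝ) (hα0 : 1/2 ≤ α) (hα1 : α < 1) (hKL : KLAt f xbar α)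
    (β : ℝ) (hβ : 0 < β)
    (F : WithLp 2 (EuclideanSpace ℝ (Fin n) × EuclideanSpace ℝ (Fin n)) → EReal)
    (hF : ∀ p, F p =
      f (WithLp.equiv 2 (EuclideanSpace ℝ (Fin n) × EuclideanSpace ℝ (Fin n)) p).1 +
        ((β/2 * ‖(WithLp.equiv 2 (EuclideanSpace ℝ (Fin n) × EuclideanSpace ℝ (Fin n)) p).1
          - (WithLp.equiv 2 (EuclideanSpace ℝ (Fin n) × EuclideanSpace ℝ (Fin n)) p).2‖^2 : ℝ) : EReal)) :
    KLAt F ((WithLp.equiv 2 (EuclideanSpace ℝ (Fin n) × EuclideanSpace ℝ (Fin n))).symm (xbar, xbar)) α := by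
  obtain rfl : F = fun q => f q.fst + ((β / 2 * ‖q.fst - q.snd‖ ^ 2 : ℝ) : EReal) := funext hF
  exact hKL.add_div_two_mul_norm_fst_sub_snd_sq hproper.1 hα0 hα1 hβ

/-- KL exponent of the iPiano potential `F(x,y) = f(x) + (β/2)‖x−y‖²`. -/
theorem stmt_8 {n : ℕ} (f : EuclideanSpace ℝ (Fin n) → EReal)
    (hproper : ProperFn f) (hclosed : LowerSemicontinuous f)
    (xbar : EuclideanSpace ℝ (Fin n)) (hxbar : xbar ∈ subdiffDom f)
    (α : ℝ) (hα0 : 1/2 ≤ α) (hα1 : α < 1) (hKL : KLAt f xbar α)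
    (β : ℝ) (hβ : 0 < β)
    (F : WithLp 2 (EuclideanSpace ℝ (Fin n) × EuclideanSpace ℝ (Fin n)) → EReal)
    (hF : ∀ p, F p =
      f (WithLp.equiv 2 (EuclideanSpace ℝ (Fin n) × EuclideanSpace ℝ (Fin n)) p).1 +
        ((β/2 * ‖(WithLp.equiv 2 (EuclideanSpace ℝ (Fin n) × EuclideanSpace ℝ (Fin n)) p).1
          - (WithLp.equiv 2 (EuclideanSpace ℝ (Fin n) × EuclideanSpace ℝ (Fin n)) p).2‖^2 : ℝ) : EReal)) :
    KLAt F ((WithLp.equiv 2 (EuclideanSpace ℝ (Fin n) × EuclideanSpace ℝ (Fin n))).symm (xbar, xbar)) α :=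
  stmt_8_general f hproper xbar α hα0 hα1 hKL β hβ F hF

end
end

section
/- Let f := h + P, where h : ℝ^n → (−∞,∞] is a proper closed function with open domain that is continuously differentiable with locally Lipschitz continuous gradient on dom h, and P : ℝ^n → (−∞,∞] is proper closed convex, with dom h ∩ dom P ≠ ∅. Let 𝒳 := {x : 0 ∈ ∂f(x)} and suppose 𝒳 ≠ ∅. Assume: (a) for each x̄ ∈ 𝒳 there exists δ > 0 such that f(y) = f(x̄) whenever y ∈ 𝒳 and ‖y − x̄‖ ≤ δ; (b) the Luo-Tseng error bound holds: for every ζ ≥ inf f there exist c > 0 and ε > 0 such that dist(x, 𝒳) ≤ c‖prox_P(x − ∇h(x)) − x‖ whenever ‖prox_P(x − ∇h(x)) − x‖ < ε and f(x) ≤ ζ. Then f is a KL function with exponent 1/2. -/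
open Filter Topology Metric Set
open scoped RealInnerProductSpace

noncomputable section

variable {E : Type*} [NormedAddCommGroup E] [InnerProductSpace ℝ E]

/-!
Away from critical points, the `f`-attentive graph of `∂f` is closed, so subgradients stay
bounded away from zero and the KL inequality holds with any exponent. At a critical point `x̄`, let
`v ∈ ∂f(x)` be small. Then `v - ∇h(x) ∈ ∂P(x)`, so by monotonicity of `∂P` the prox residual
`‖prox_P(x - ∇h(x)) - x‖` is at most `‖v‖`, and the Luo–Tseng bound gives a critical point `y` with
`‖x - y‖ ≤ 2c‖v‖`; by separation of critical values, `f(y) = f(x̄)`. The descent lemma for `h` and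
the subgradient inequality for `P` at `x` give `f(x) - f(y) ≤ ⟪v, x - y⟫ + L‖x - y‖² = O(‖v‖²)`,
that is, `√(f(x) - f(x̄)) = O(‖v‖)`.
-/

lemma le_of_forall_pos_le_add_mul {a b c : ℝ} (h : ∀ t : ℝ, 0 < t → t ≤ 1 → a ≤ b + t * c) :
    a ≤ b := by
  have hlim : Tendsto (fun t : ℝ => b + t * c) (𝓝[>] 0) (𝓝 b) := by
    have : Continuous fun t : ℝ => b + t * c := by fun_prop
    simpa using (this.tendsto 0).mono_left nhdsWithin_le_nhds
  refine ge_of_tendsto hlim ?_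
  filter_upwards [Ioc_mem_nhdsGT one_pos] with t ht using h t ht.1 ht.2

lemma inv_sqrt_mul_rpow_half_le {s K t : ℝ} (hK : 0 < K) (ht : 0 ≤ t) (hs : s ≤ K * t ^ 2) :
    (√K)⁻¹ * s ^ (1/2 : ℝ) ≤ t := by
  rw [← Real.sqrt_eq_rpow, inv_mul_le_iff₀ (Real.sqrt_pos.2 hK)]
  calc √s ≤ √(K * t ^ 2) := Real.sqrt_le_sqrt hs
    _ = √K * t := by rw [Real.sqrt_mul hK.le, Real.sqrt_sq ht]

lemma abs_sub_sub_inner_le_of_lipschitzOnWith [CompleteSpace E] {g : E → ℝ} {g' : E → E}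
    {s : Set E} (hs : Convex ℝ s) (hg : ∀ x ∈ s, HasGradientAt g (g' x) x) {L : NNReal}
    (hL : LipschitzOnWith L g' s) {a b : E} (ha : a ∈ s) (hb : b ∈ s) :
    |g b - g a - ⟪g' a, b - a⟫| ≤ L * ‖b - a‖ ^ 2 := by
  have hseg : segment ℝ a b ⊆ s := hs.segment_subset ha hb
  have hbound : ∀ y ∈ segment ℝ a b,
      ‖InnerProductSpace.toDual ℝ E (g' y) - InnerProductSpace.toDual ℝ E (g' a)‖
        ≤ L * ‖b - a‖ := by
    intro y hy
    rw [← map_sub, LinearIsometryEquiv.norm_map, ← dist_eq_norm]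
    calc dist (g' y) (g' a) ≤ L * dist y a := hL.dist_le_mul y (hseg hy) a ha
      _ ≤ L * ‖b - a‖ := by
        gcongr
        rw [dist_eq_norm]
        exact norm_sub_le_of_mem_segment hy
  have := (convex_segment a b).norm_image_sub_le_of_norm_hasFDerivWithin_le'
    (fun y hy => (hg y (hseg hy)).hasFDerivAt.hasFDerivWithinAt) hbound
    (left_mem_segment ℝ a b) (right_mem_segment ℝ a b)
  rw [Real.norm_eq_abs, InnerProductSpace.toDual_apply_apply] at this
  linarith [sq (‖b - a‖)]

omit [InnerProductSpace ℝ E] in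
lemma exists_ball_subset_lipschitzOnWith {F : Type*} [PseudoEMetricSpace F] {U : Set E}
    (hU : IsOpen U) {g : E → F}
    (hg : ∀ x ∈ U, ∃ ε > (0:ℝ), ∃ L : NNReal, LipschitzOnWith L g (ball x ε ∩ U)) {x : E}
    (hx : x ∈ U) : ∃ ρ > 0, ball x ρ ⊆ U ∧ ∃ L : NNReal, LipschitzOnWith L g (ball x ρ) := by
  obtain ⟨ρ₁, hρ₁, L, hL⟩ := hg x hx
  obtain ⟨ρ₂, hρ₂, hball⟩ := Metric.isOpen_iff.1 hU x hx
  have hsub : ball x (min ρ₁ ρ₂) ⊆ U := (ball_subset_ball (min_le_right _ _)).trans hball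
  exact ⟨min ρ₁ ρ₂, lt_min hρ₁ hρ₂, hsub, L,
    hL.mono fun z hz => ⟨ball_subset_ball (min_le_left _ _) hz, hsub hz⟩⟩

def convexSubdiff (P : E → EReal) (x : E) : Set E :=
  {u | P x < ⊤ ∧ ∀ y, P x + ((⟪u, y - x⟫ : ℝ) : EReal) ≤ P y}

lemma EConvex.apply_add_le {P : E → EReal} (hP : EConvex P) {x y : E} {p q a b : ℝ}
    (hx : P x ≤ p) (hy : P y ≤ q) (ha : 0 ≤ a) (hb : 0 ≤ b) (hab : a + b = 1) :
    P (a • x + b • y) ≤ ((a * p + b * q : ℝ) : EReal) :=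
  hP (x := (x, p)) (y := (y, q)) hx hy ha hb hab

lemma EConvex.apply_segment_le {P : E → EReal} (hP : EConvex P) {x y : E} {p q t : ℝ}
    (hx : P x ≤ p) (hy : P y ≤ q) (ht₀ : 0 ≤ t) (ht₁ : t ≤ 1) :
    P (x + t • (y - x)) ≤ ((p + t * (q - p) : ℝ) : EReal) := by
  have := hP.apply_add_le hx hy (sub_nonneg.2 ht₁) ht₀ (sub_add_cancel 1 t)
  convert this using 2
  · module
  · ring

lemma EConvex.regSubdiff_subset_convexSubdiff {P : E → EReal} (hP : EConvex P)
    (hPbot : ∀ x, P x ≠ ⊥) (x : E) : regSubdiff P x ⊆ convexSubdiff P x := by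
  rintro u ⟨hx, hu⟩
  refine ⟨hx, fun y => ?_⟩
  rcases eq_top_or_lt_top (P y) with hy | hy
  · simp [hy]
  lift P x to ℝ using ⟨hx.ne, hPbot x⟩ with p hp
  lift P y to ℝ using ⟨hy.ne, hPbot y⟩ with q hq
  norm_cast
  suffices ∀ ε : ℝ, 0 < ε → ε ≤ 1 → ⟪u, y - x⟫ ≤ q - p + ε * ‖y - x‖ by
    linarith [le_of_forall_pos_le_add_mul this]
  intro ε hε _
  have hseg : Tendsto (fun t : ℝ => x + t • (y - x)) (𝓝[>] 0) (𝓝 x) := by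
    have : Continuous fun t : ℝ => x + t • (y - x) := by fun_prop
    simpa using (this.tendsto 0).mono_left nhdsWithin_le_nhds
  obtain ⟨t, hut, ht₀, ht₁⟩ := ((hseg.eventually (hu ε hε)).and (Ioc_mem_nhdsGT one_pos)).exists
  have hconv := hP.apply_segment_le hp.ge hq.ge ht₀.le ht₁
  simp only [add_sub_cancel_left, inner_smul_right, norm_smul, Real.norm_of_nonneg ht₀.le] at hut
  have : t * ⟪u, y - x⟫ ≤ t * (q - p + ε * ‖y - x‖) := by
    have := hut.trans hconv
    norm_cast at this
    linarith
  exact le_of_mul_le_mul_left this ht₀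

lemma convexSubdiff_monotone {P : E → EReal} (hPbot : ∀ x, P x ≠ ⊥) {x y u v : E}
    (hu : u ∈ convexSubdiff P x) (hv : v ∈ convexSubdiff P y) : 0 ≤ ⟪u - v, x - y⟫ := by
  have hxy := hu.2 y
  have hyx := hv.2 x
  lift P x to ℝ using ⟨hu.1.ne, hPbot x⟩ with p
  lift P y to ℝ using ⟨hv.1.ne, hPbot y⟩ with q
  norm_cast at hxy hyx
  rw [← neg_sub x y, inner_neg_right] at hxy
  rw [inner_sub_left]
  linarith

omit [InnerProductSpace ℝ E] in
lemma IsProxPt.lt_top {P : E → EReal} {z w y : E} (hw : IsProxPt P z w) (hy : P y < ⊤) :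
    P w < ⊤ := by
  have hlt : P w + ((1/2 * ‖w - z‖^2 : ℝ) : EReal) < ⊤ :=
    (hw y).trans_lt (EReal.add_lt_top hy.ne (EReal.coe_ne_top _))
  by_contra! htop
  rw [top_le_iff.1 htop, EReal.top_add_coe] at hlt
  exact lt_irrefl _ hlt

lemma IsProxPt.sub_mem_convexSubdiff {P : E → EReal} (hPbot : ∀ x, P x ≠ ⊥) (hPconv : EConvex P)
    {z w : E} (hw : IsProxPt P z w) (hwtop : P w < ⊤) : z - w ∈ convexSubdiff P w := by
  refine ⟨hwtop, fun y => ?_⟩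
  rcases eq_top_or_lt_top (P y) with hy | hy
  · simp [hy]
  lift P w to ℝ using ⟨hwtop.ne, hPbot w⟩ with p hp
  lift P y to ℝ using ⟨hy.ne, hPbot y⟩ with q hq
  norm_cast
  refine le_of_forall_pos_le_add_mul (c := ‖y - w‖ ^ 2 / 2) fun t ht₀ ht₁ => ?_
  have hprox := (hw (w + t • (y - w))).trans
    (add_le_add_left (hPconv.apply_segment_le hp.ge hq.ge ht₀.le ht₁) _)
  rw [← hp] at hprox
  norm_cast at hprox
  have hexp : ‖w + t • (y - w) - z‖ ^ 2
      = ‖w - z‖ ^ 2 - 2 * t * ⟪z - w, y - w⟫ + t ^ 2 * ‖y - w‖ ^ 2 := by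
    rw [add_sub_right_comm, norm_add_sq_real, inner_smul_right, norm_smul, mul_pow,
      Real.norm_of_nonneg ht₀.le, ← neg_sub z w, inner_neg_left, norm_neg]
    ring
  rw [hexp] at hprox
  have : t * (p + ⟪z - w, y - w⟫) ≤ t * (q + t * (‖y - w‖ ^ 2 / 2)) := by nlinarith
  exact le_of_mul_le_mul_left this ht₀

lemma IsProxPt.norm_sub_le {P : E → EReal} (hPbot : ∀ x, P x ≠ ⊥) (hPconv : EConvex P)
    {x z w u : E} (hw : IsProxPt P z w) (hu : u ∈ convexSubdiff P x) : ‖w - x‖ ≤ ‖x + u - z‖ := by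
  have hmono := convexSubdiff_monotone hPbot
    (hw.sub_mem_convexSubdiff hPbot hPconv (hw.lt_top hu.1)) hu
  have hsplit : z - w - u = -((w - x) + (x + u - z)) := by abel
  rw [hsplit, inner_neg_left, inner_add_left, real_inner_self_eq_norm_sq] at hmono
  have hsq : ‖w - x‖ * ‖w - x‖ ≤ ‖x + u - z‖ * ‖w - x‖ := by
    linarith [sq (‖w - x‖), (abs_le.1 (abs_real_inner_le_norm (x + u - z) (w - x))).1]
  rcases (norm_nonneg (w - x)).eq_or_lt with h0 | hpos
  · rw [← h0]
    exact norm_nonneg _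
  · exact le_of_mul_le_mul_right hsq hpos

lemma exists_isProxPt [ProperSpace E] {P : E → EReal} (hPbot : ∀ x, P x ≠ ⊥)
    (hPclosed : LowerSemicontinuous P) {x₀ u : E} (hu : u ∈ convexSubdiff P x₀) (z : E) :
    ∃ w, IsProxPt P z w := by
  set g : E → EReal := fun y => P y + ((1/2 * ‖y - z‖^2 : ℝ) : EReal)
  have hg : LowerSemicontinuous g :=
    hPclosed.add' (continuous_coe_real_ereal.comp (by fun_prop)).lowerSemicontinuous
      fun y => EReal.continuousAt_add (.inr (EReal.coe_ne_bot _)) (.inl (hPbot y))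
  set R := 2 * ‖u‖ + 2 * ‖x₀ - z‖ + 2 with hRdef
  have hx₀ : x₀ ∈ closedBall z R := by
    rw [mem_closedBall, dist_eq_norm]
    linarith [norm_nonneg u, norm_nonneg (x₀ - z), hRdef]
  obtain ⟨w, -, hwmin⟩ :=
    (hg.lowerSemicontinuousOn _).exists_isMinOn ⟨x₀, hx₀⟩ (isCompact_closedBall z R)
  refine ⟨w, fun y => ?_⟩
  by_cases hy : y ∈ closedBall z R
  · exact hwmin hy
  refine (hwmin hx₀).trans ?_
  -- outside the ball, the quadratic term beats the affine minorant of `P`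
  have hR : R < ‖y - z‖ := by simpa [dist_eq_norm] using hy
  have hinner : -(‖u‖ * (‖y - z‖ + ‖x₀ - z‖)) ≤ ⟪u, y - x₀⟫ := by
    have hyx₀ : ‖y - x₀‖ ≤ ‖y - z‖ + ‖x₀ - z‖ := norm_sub_le_norm_sub_add_norm_sub y z x₀ |>.trans
      (by rw [norm_sub_rev z x₀])
    nlinarith [(abs_le.1 (abs_real_inner_le_norm u (y - x₀))).1, norm_nonneg u]
  have hlow := hu.2 y
  lift P x₀ to ℝ using ⟨hu.1.ne, hPbot x₀⟩ with p hp
  calc g x₀ = ((p + 1/2 * ‖x₀ - z‖^2 : ℝ) : EReal) := by simp only [g, ← hp, EReal.coe_add]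
    _ ≤ ((p + ⟪u, y - x₀⟫ : ℝ) : EReal) + ((1/2 * ‖y - z‖^2 : ℝ) : EReal) := by
        norm_cast
        nlinarith [norm_nonneg u, norm_nonneg (x₀ - z)]
    _ ≤ g y := add_le_add_left (by exact_mod_cast hlow) _

lemma sub_mem_regSubdiff_of_mem_regSubdiff_add_s10 [CompleteSpace E] {h P : E → EReal} {x v g : E}
    (hhbot : ∀ x, h x ≠ ⊥) (hPbot : ∀ x, P x ≠ ⊥) (hfin : edomain h ∈ 𝓝 x)
    (hg : HasGradientAt (fun y => (h y).toReal) g x) (hv : v ∈ regSubdiff (h + P) x) :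
    v - g ∈ regSubdiff P x := by
  obtain ⟨hfx, hv⟩ := hv
  obtain ⟨hhx, hPx⟩ := (EReal.add_ne_top_iff_ne_top₂ (hhbot x) (hPbot x)).1 hfx.ne
  refine ⟨hPx.lt_top, fun ε hε => ?_⟩
  have hlin := hg.hasFDerivAt.isLittleO.def (half_pos hε)
  filter_upwards [hv (ε / 2) (half_pos hε), hlin, hfin] with z hz hlin hhz
  rcases eq_top_or_lt_top (P z) with hPz | hPz
  · simp [hPz]
  simp only [Pi.add_apply, InnerProductSpace.toDual_apply_apply] at hz hlin
  lift h x to ℝ using ⟨hhx, hhbot x⟩ with a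
  lift P x to ℝ using ⟨hPx, hPbot x⟩ with p
  lift h z to ℝ using ⟨hhz.ne, hhbot z⟩ with b
  lift P z to ℝ using ⟨hPz.ne, hPbot z⟩ with q
  simp only [EReal.toReal_coe, Real.norm_eq_abs, abs_le] at hlin
  norm_cast at hz ⊢
  rw [inner_sub_left]
  linarith [hlin.1]

lemma sub_mem_convexSubdiff_of_mem_limSubdiff_add [CompleteSpace E] {h P : E → EReal} {h' : E → E}
    (hhbot : ∀ x, h x ≠ ⊥) (hPbot : ∀ x, P x ≠ ⊥) (hPclosed : LowerSemicontinuous P)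
    (hPconv : EConvex P) (hopen : IsOpen (edomain h))
    (hgrad : ∀ x ∈ edomain h, HasGradientAt (fun y => (h y).toReal) (h' x) x)
    (hgradcont : ContinuousOn h' (edomain h)) {x v : E} (hv : v ∈ limSubdiff (h + P) x) :
    v - h' x ∈ convexSubdiff P x := by
  obtain ⟨hfx, xs, vs, hxs, -, hvs, hreg⟩ := hv
  obtain ⟨hhx, hPx⟩ := (EReal.add_ne_top_iff_ne_top₂ (hhbot x) (hPbot x)).1 hfx.ne
  have hxdom : x ∈ edomain h := hhx.lt_top
  have hsub : ∀ᶠ t in atTop, vs t - h' (xs t) ∈ convexSubdiff P (xs t) := by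
    filter_upwards [hxs.eventually (hopen.mem_nhds hxdom)] with t ht
    exact hPconv.regSubdiff_subset_convexSubdiff hPbot _ <|
      sub_mem_regSubdiff_of_mem_regSubdiff_add_s10 hhbot hPbot (hopen.mem_nhds ht) (hgrad _ ht) (hreg t)
  have hlim : Tendsto (fun t => (xs t, vs t - h' (xs t))) atTop (𝓝 (x, v - h' x)) :=
    hxs.prodMk_nhds (hvs.sub ((hgradcont.continuousAt (hopen.mem_nhds hxdom)).tendsto.comp hxs))
  refine ⟨hPx.lt_top, fun y => ?_⟩
  have hclosed : IsClosed {p : E × E | P p.1 + ((⟪p.2, y - p.1⟫ : ℝ) : EReal) ≤ P y} := by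
    refine LowerSemicontinuous.isClosed_preimage (f := fun p : E × E => P p.1 + _) ?_ (P y)
    refine (hPclosed.comp continuous_fst).add' ?_ fun p => ?_
    · exact (continuous_coe_real_ereal.comp (by fun_prop)).lowerSemicontinuous
    · exact EReal.continuousAt_add (.inr (EReal.coe_ne_bot _)) (.inl (hPbot _))
  exact hclosed.mem_of_tendsto hlim (hsub.mono fun t ht => ht.2 y)

lemma le_add_inner_add_sq_of_sub_mem_convexSubdiff [CompleteSpace E] {h P : E → EReal}
    {h' : E → E} {s : Set E} (hhbot : ∀ x, h x ≠ ⊥) (hPbot : ∀ x, P x ≠ ⊥) (hs : Convex ℝ s)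
    (hsdom : s ⊆ edomain h) (hgrad : ∀ x ∈ s, HasGradientAt (fun y => (h y).toReal) (h' x) x)
    {L : NNReal} (hL : LipschitzOnWith L h' s) {x y v : E} (hx : x ∈ s) (hy : y ∈ s)
    (hv : v - h' x ∈ convexSubdiff P x) :
    (h + P) x ≤ (h + P) y + ((⟪v, x - y⟫ + L * ‖x - y‖ ^ 2 : ℝ) : EReal) := by
  rcases eq_top_or_lt_top (P y) with hPy | hPy
  · rw [Pi.add_apply, Pi.add_apply, hPy, EReal.add_top_of_ne_bot (hhbot y), EReal.top_add_coe]
    exact le_top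
  have hdesc := abs_sub_sub_inner_le_of_lipschitzOnWith hs hgrad hL hx hy
  have hsub := hv.2 y
  simp only [Pi.add_apply]
  lift h x to ℝ using ⟨(hsdom hx).ne, hhbot x⟩ with a
  lift h y to ℝ using ⟨(hsdom hy).ne, hhbot y⟩ with b
  lift P x to ℝ using ⟨hv.1.ne, hPbot x⟩ with p
  lift P y to ℝ using ⟨hPy.ne, hPbot y⟩ with q
  simp only [EReal.toReal_coe] at hdesc
  norm_cast at hsub ⊢
  rw [inner_sub_left] at hsub
  rw [norm_sub_rev x y, ← neg_sub y x, inner_neg_right]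
  linarith [(abs_le.1 hdesc).1]

lemma KLAt_of_forall_lt_norm {f : E → EReal} {xbar : E} {r : ℝ} (hr : f xbar = r)
    {α c ε ν η : ℝ} (hα : 0 ≤ α) (hc : 0 < c) (hε : 0 < ε) (hν : 0 < ν) (hη : 0 < η)
    (H : ∀ x (a : ℝ), f x = a → ‖x - xbar‖ ≤ ε → r < a → a < r + ν →
      ∀ v ∈ limSubdiff f x, ‖v‖ < η → c * (a - r) ^ α ≤ ‖v‖) :
    KLAt f xbar α := by
  refine ⟨min c η, lt_min hc hη, ε, hε, ((min ν 1 : ℝ) : EReal),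
    by exact_mod_cast lt_min hν one_pos, fun x hx hlo hhi => ?_⟩
  rw [hr] at hlo hhi ⊢
  have hfx : f x ≠ ⊤ := (hhi.trans (EReal.add_lt_top (EReal.coe_ne_top _) (EReal.coe_ne_top _))).ne
  lift f x to ℝ using ⟨hfx, (hlo.trans' (EReal.bot_lt_coe r)).ne'⟩ with a ha
  rw [← EReal.coe_sub, EReal.toReal_coe]
  norm_cast at hlo hhi
  have hpow : (a - r) ^ α ≤ 1 := Real.rpow_le_one (by linarith) (by linarith [min_le_right ν 1]) hα
  refine le_infEDist.2 fun v hv => ?_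
  rw [edist_dist, dist_zero_left]
  refine ENNReal.ofReal_le_ofReal ?_
  rcases lt_or_ge ‖v‖ η with hvη | hvη
  · calc min c η * (a - r) ^ α ≤ c * (a - r) ^ α := by gcongr; exact min_le_left _ _
      _ ≤ ‖v‖ := H x a ha.symm hx hlo (by linarith [min_le_left ν 1]) v hv hvη
  · calc min c η * (a - r) ^ α ≤ η * 1 := by
          gcongr
          exact min_le_right _ _
      _ ≤ ‖v‖ := by rwa [mul_one]

lemma exists_le_norm_of_zero_notMem_limSubdiff {f : E → EReal} {xbar : E} {r : ℝ}
    (hr : f xbar = r) (h0 : (0 : E) ∉ limSubdiff f xbar) :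
    ∃ δ > 0, ∀ x (a : ℝ), f x = a → ‖x - xbar‖ < δ → |a - r| < δ →
      ∀ v ∈ limSubdiff f x, δ ≤ ‖v‖ := by
  set G : Set (E × EReal × E) := {p | p.2.1 = f p.1 ∧ p.2.2 ∈ regSubdiff f p.1}
  have hclosure : ∀ x v, v ∈ limSubdiff f x → (x, f x, v) ∈ closure G := by
    rintro x v ⟨-, xs, vs, hxs, hfxs, hvs, hreg⟩
    exact mem_closure_of_tendsto (hxs.prodMk_nhds (hfxs.prodMk_nhds hvs))
      (Eventually.of_forall fun t => ⟨rfl, hreg t⟩)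
  have hbar : ((xbar, r, 0) : E × ℝ × E) ∉
      (fun p : E × ℝ × E => (p.1, (p.2.1 : EReal), p.2.2)) ⁻¹' closure G := by
    intro hmem
    obtain ⟨p, hpG, hp⟩ := mem_closure_iff_seq_limit.1 hmem
    refine h0 ⟨hr ▸ EReal.coe_lt_top r, fun t => (p t).1, fun t => (p t).2.2,
      (continuous_fst.tendsto _).comp hp, ?_, (continuous_snd.snd.tendsto _).comp hp,
      fun t => (hpG t).2⟩
    rw [hr]
    exact ((continuous_snd.fst.tendsto _).comp hp).congr fun t => (hpG t).1
  have hopen : IsOpen ((fun p : E × ℝ × E => (p.1, (p.2.1 : EReal), p.2.2)) ⁻¹' (closure G)ᶜ) :=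
    isClosed_closure.isOpen_compl.preimage <| continuous_fst.prodMk
      ((continuous_coe_real_ereal.comp continuous_snd.fst).prodMk continuous_snd.snd)
  obtain ⟨δ, hδ, hball⟩ := Metric.isOpen_iff.1 hopen _ hbar
  refine ⟨δ, hδ, fun x a hfx hx ha v hv => le_of_not_gt fun hvδ => ?_⟩
  have hnear : ((x, a, v) : E × ℝ × E) ∈ ball (xbar, r, 0) δ := by
    rw [mem_ball, Prod.dist_eq, Prod.dist_eq, dist_eq_norm, Real.dist_eq, dist_zero_right]
    exact max_lt hx (max_lt ha hvδ)
  have hgraph := hclosure x v hv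
  rw [hfx] at hgraph
  exact hball hnear hgraph

lemma KLAt_of_zero_notMem_limSubdiff {f : E → EReal} {xbar : E} {r : ℝ} (hr : f xbar = r)
    {α : ℝ} (hα : 0 ≤ α) (h0 : (0 : E) ∉ limSubdiff f xbar) : KLAt f xbar α := by
  obtain ⟨δ, hδ, hbound⟩ := exists_le_norm_of_zero_notMem_limSubdiff hr h0
  refine KLAt_of_forall_lt_norm hr hα one_pos (half_pos hδ) hδ hδ
    fun x a hfx hx hra har v hv hvδ => absurd (hbound x a hfx (by linarith) ?_ v hv) (not_le.2 hvδ)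
  rw [abs_lt]
  constructor <;> linarith

def critPoints (f : E → EReal) : Set E := {x | (0 : E) ∈ limSubdiff f x}

lemma exists_mem_critPoints_near [ProperSpace E] {h P : E → EReal} {h' : E → E}
    (hhbot : ∀ x, h x ≠ ⊥) (hPbot : ∀ x, P x ≠ ⊥) (hPclosed : LowerSemicontinuous P)
    (hPconv : EConvex P) (hopen : IsOpen (edomain h))
    (hgrad : ∀ x ∈ edomain h, HasGradientAt (fun y => (h y).toReal) (h' x) x)
    (hgradcont : ContinuousOn h' (edomain h)) (hne : (critPoints (h + P)).Nonempty)
    {c ε ζ : ℝ} (hc : 0 < c)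
    (hEB : ∀ x w, IsProxPt P (x - h' x) w → ‖w - x‖ < ε → (h + P) x ≤ (ζ : EReal) →
      infDist x (critPoints (h + P)) ≤ c * ‖w - x‖)
    {x v : E} (hv : v ∈ limSubdiff (h + P) x) (hvε : ‖v‖ < ε) (hxζ : (h + P) x ≤ (ζ : EReal)) :
    ∃ y ∈ critPoints (h + P), ‖x - y‖ ≤ 2 * c * ‖v‖ := by
  rcases eq_or_ne v 0 with rfl | hv0
  · exact ⟨x, hv, by simp⟩
  have hu := sub_mem_convexSubdiff_of_mem_limSubdiff_add hhbot hPbot hPclosed hPconv hopen hgrad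
    hgradcont hv
  obtain ⟨w, hw⟩ := exists_isProxPt hPbot hPclosed hu (x - h' x)
  have hwx : ‖w - x‖ ≤ ‖v‖ := by
    simpa using hw.norm_sub_le hPbot hPconv hu
  have hdist : infDist x (critPoints (h + P)) < 2 * c * ‖v‖ := by
    calc infDist x (critPoints (h + P)) ≤ c * ‖w - x‖ := hEB x w hw (hwx.trans_lt hvε) hxζ
      _ ≤ c * ‖v‖ := by gcongr
      _ < 2 * c * ‖v‖ := by nlinarith [norm_pos_iff.2 hv0]
  obtain ⟨y, hy, hxy⟩ := (infDist_lt_iff hne).1 hdist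
  exact ⟨y, hy, by rw [← dist_eq_norm]; exact hxy.le⟩

lemma KLAt_half_of_errorBound [ProperSpace E] {h P : E → EReal} {h' : E → E}
    (hhbot : ∀ x, h x ≠ ⊥) (hPbot : ∀ x, P x ≠ ⊥) (hPclosed : LowerSemicontinuous P)
    (hPconv : EConvex P) (hopen : IsOpen (edomain h))
    (hgrad : ∀ x ∈ edomain h, HasGradientAt (fun y => (h y).toReal) (h' x) x)
    (hgradcont : ContinuousOn h' (edomain h))
    (hgradlip : ∀ x ∈ edomain h, ∃ ε > (0:ℝ), ∃ L : NNReal,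
      LipschitzOnWith L h' (ball x ε ∩ edomain h))
    {xbar : E} (hxbar : xbar ∈ critPoints (h + P))
    (hsep : ∃ δ > (0:ℝ), ∀ y ∈ critPoints (h + P), ‖y - xbar‖ ≤ δ → (h + P) y = (h + P) xbar)
    (hEB : ∃ c > (0:ℝ), ∃ ε > (0:ℝ), ∀ x w, IsProxPt P (x - h' x) w → ‖w - x‖ < ε →
      (h + P) x ≤ ((((h + P) xbar).toReal + 1 : ℝ) : EReal) →
        infDist x (critPoints (h + P)) ≤ c * ‖w - x‖) :
    KLAt (h + P) xbar (1/2) := by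
  obtain ⟨δ, hδ, hsep⟩ := hsep
  obtain ⟨c, hc, ε, hε, hEB⟩ := hEB
  have hxdom : xbar ∈ edomain h :=
    ((EReal.add_ne_top_iff_ne_top₂ (hhbot xbar) (hPbot xbar)).1 hxbar.1.ne).1.lt_top
  set r := ((h + P) xbar).toReal
  have hr : (h + P) xbar = r :=
    (EReal.coe_toReal hxbar.1.ne (EReal.add_ne_bot_iff.2 ⟨hhbot xbar, hPbot xbar⟩)).symm
  obtain ⟨ρ, hρ, hρdom, L, hL⟩ := exists_ball_subset_lipschitzOnWith hopen hgradlip hxdom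
  set ε₀ := min δ ρ / 2 with hε₀def
  have hε₀ : 0 < ε₀ := half_pos (lt_min hδ hρ)
  set K := 2 * c + 4 * c ^ 2 * L
  have hK : 0 < K := by positivity
  refine KLAt_of_forall_lt_norm hr (η := min ε (ε₀ / (2 * c))) (by norm_num)
    (inv_pos.2 (Real.sqrt_pos.2 hK)) hε₀ one_pos (lt_min hε (div_pos hε₀ (by positivity)))
    fun x a hfx hx hra har v hv hvη => ?_
  obtain ⟨y, hy, hxy⟩ := exists_mem_critPoints_near hhbot hPbot hPclosed hPconv hopen hgrad
    hgradcont ⟨xbar, hxbar⟩ hc hEB hv (hvη.trans_le (min_le_left _ _))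
    (by rw [hfx]; exact_mod_cast har.le)
  have hxy' : ‖x - y‖ < ε₀ := by
    have := hvη.trans_le (min_le_right _ _)
    rw [lt_div_iff₀ (by positivity)] at this
    linarith
  have hyρ : ‖y - xbar‖ < min δ ρ := by
    calc ‖y - xbar‖ ≤ ‖x - y‖ + ‖x - xbar‖ := by
          rw [norm_sub_rev x y]; exact norm_sub_le_norm_sub_add_norm_sub y x xbar
      _ < min δ ρ := by linarith
  have hxρ : x ∈ ball xbar ρ := mem_ball_iff_norm.2 (by linarith [min_le_right δ ρ])
  have hfy : (h + P) y = r := (hsep y hy (by linarith [min_le_left δ ρ])).trans hr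
  have hgrowth := le_add_inner_add_sq_of_sub_mem_convexSubdiff hhbot hPbot (convex_ball xbar ρ)
    hρdom (fun z hz => hgrad z (hρdom hz)) hL hxρ
    (mem_ball_iff_norm.2 (hyρ.trans_le (min_le_right _ _)))
    (sub_mem_convexSubdiff_of_mem_limSubdiff_add hhbot hPbot hPclosed hPconv hopen hgrad
      hgradcont hv)
  rw [hfx, hfy] at hgrowth
  norm_cast at hgrowth
  have hquad : a - r ≤ K * ‖v‖ ^ 2 := by
    have hvxy : ‖v‖ * ‖x - y‖ ≤ 2 * c * ‖v‖ ^ 2 := by nlinarith [norm_nonneg v]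
    have hsq : (L : ℝ) * ‖x - y‖ ^ 2 ≤ L * (2 * c * ‖v‖) ^ 2 := by gcongr
    nlinarith [real_inner_le_norm v (x - y)]
  exact inv_sqrt_mul_rpow_half_le hK (norm_nonneg v) hquad

theorem stmt_10_general {n : ℕ} (h : EuclideanSpace ℝ (Fin n) → EReal)
    (hhproper : ProperFn h)
    (hopen : IsOpen (edomain h))
    (h' : EuclideanSpace ℝ (Fin n) → EuclideanSpace ℝ (Fin n))
    (hgrad : ∀ x ∈ edomain h, HasGradientAt (fun y => (h y).toReal) (h' x) x)
    (hgradcont : ContinuousOn h' (edomain h))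
    (hgradlip : ∀ x ∈ edomain h, ∃ ε > (0:ℝ), ∃ L : NNReal,
      LipschitzOnWith L h' (Metric.ball x ε ∩ edomain h))
    (P : EuclideanSpace ℝ (Fin n) → EReal)
    (hPproper : ProperFn P) (hPclosed : LowerSemicontinuous P) (hPconv : EConvex P)
    (f : EuclideanSpace ℝ (Fin n) → EReal) (hf : ∀ x, f x = h x + P x)
    (X : Set (EuclideanSpace ℝ (Fin n))) (hX : X = {x | (0 : EuclideanSpace ℝ (Fin n)) ∈ limSubdiff f x})
    (hsep : ∀ xbar ∈ X, ∃ δ > (0:ℝ), ∀ y ∈ X, ‖y - xbar‖ ≤ δ → f y = f xbar)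
    (hLT : ∀ ζ : ℝ, (⨅ x, f x) ≤ (ζ : EReal) → ∃ c > (0:ℝ), ∃ ε > (0:ℝ),
      ∀ x : EuclideanSpace ℝ (Fin n), ∀ w : EuclideanSpace ℝ (Fin n),
        IsProxPt P (x - h' x) w → ‖w - x‖ < ε → f x ≤ (ζ : EReal) →
          infDist x X ≤ c * ‖w - x‖) :
    IsKL f (1/2) := by
  obtain rfl : f = h + P := funext hf
  subst hX
  intro xbar ⟨v, hv⟩
  have hr : (h + P) xbar = ((h + P) xbar).toReal :=
    (EReal.coe_toReal hv.1.ne (EReal.add_ne_bot_iff.2 ⟨hhproper.1 xbar, hPproper.1 xbar⟩)).symm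
  by_cases hcrit : xbar ∈ critPoints (h + P)
  · refine KLAt_half_of_errorBound hhproper.1 hPproper.1 hPclosed hPconv hopen hgrad hgradcont
      hgradlip hcrit (hsep xbar hcrit) (hLT _ ((iInf_le _ xbar).trans ?_))
    rw [hr]
    exact_mod_cast le_add_of_nonneg_right zero_le_one
  · exact KLAt_of_zero_notMem_limSubdiff hr (by norm_num) hcrit

/-- The Luo-Tseng error bound plus separation of stationary values
implies that `f = h + P` is a KL function with exponent `1/2`. -/
theorem stmt_10 {n : ℕ} (h : EuclideanSpace ℝ (Fin n) → EReal)
    (hhproper : ProperFn h) (hhclosed : LowerSemicontinuous h)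
    (hopen : IsOpen (edomain h))
    (h' : EuclideanSpace ℝ (Fin n) → EuclideanSpace ℝ (Fin n))
    (hgrad : ∀ x ∈ edomain h, HasGradientAt (fun y => (h y).toReal) (h' x) x)
    (hgradcont : ContinuousOn h' (edomain h))
    (hgradlip : ∀ x ∈ edomain h, ∃ ε > (0:ℝ), ∃ L : NNReal,
      LipschitzOnWith L h' (Metric.ball x ε ∩ edomain h))
    (P : EuclideanSpace ℝ (Fin n) → EReal)
    (hPproper : ProperFn P) (hPclosed : LowerSemicontinuous P) (hPconv : EConvex P)
    (hcap : (edomain h ∩ edomain P).Nonempty)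
    (f : EuclideanSpace ℝ (Fin n) → EReal) (hf : ∀ x, f x = h x + P x)
    (X : Set (EuclideanSpace ℝ (Fin n))) (hX : X = {x | (0 : EuclideanSpace ℝ (Fin n)) ∈ limSubdiff f x})
    (hXne : X.Nonempty)
    (hsep : ∀ xbar ∈ X, ∃ δ > (0:ℝ), ∀ y ∈ X, ‖y - xbar‖ ≤ δ → f y = f xbar)
    (hLT : ∀ ζ : ℝ, (⨅ x, f x) ≤ (ζ : EReal) → ∃ c > (0:ℝ), ∃ ε > (0:ℝ),
      ∀ x : EuclideanSpace ℝ (Fin n), ∀ w : EuclideanSpace ℝ (Fin n),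
        IsProxPt P (x - h' x) w → ‖w - x‖ < ε → f x ≤ (ζ : EReal) →
          infDist x X ≤ c * ‖w - x‖) :
    IsKL f (1/2) :=
  stmt_10_general h hhproper hopen h' hgrad hgradcont hgradlip P hPproper hPclosed hPconv f hf X hX
    hsep hLT

end
end

section
/- Let A ∈ ℝ^{m×n}, b ∈ ℝ^m, λ > 0 and θ > 0, and let r : ℝ → ℝ be the MCP penalty: r(t) = λ|t| − t²/(2θ) if |t| ≤ θλ; r(t) = θλ²/2 if |t| > θλ. Then the function f(x) = (1/2)‖Ax − b‖² + Σ_{i=1}^n r(x_i) is a KL function with exponent 1/2. -/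
/-!
Near `xbar`, give each `x` the pattern of MCP pieces (`{0}`, `[0, θλ]`, `[θλ, ∞)` and their
mirror images) containing its coordinates; for `x` close enough, `xbar` lies in the same closed
pieces. On such a pattern `f` is a quadratic in `y = x - xbar`, restricted to the subspace of
coordinates not pinned at `0`, and every limiting subgradient of `f` at `x` has the same
component along that subspace as the gradient of this quadratic. A quadratic
`q y = ⟪g, y⟫ + ⟪H y, y⟫ / 2` satisfies the KL inequality with exponent `1/2` at `0`: if `g ≠ 0`
the gradient stays above `‖g‖ / 2` near `0`, and if `g = 0` then `μ ⟪H y, y⟫ ≤ ‖H y‖²` for some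
`μ > 0` because `H` is injective on `(ker H)ᗮ`. There are finitely many patterns, so the
constants can be chosen uniformly.
-/

open Filter Topology Metric Set
open scoped RealInnerProductSpace

noncomputable section

variable {E : Type*} [NormedAddCommGroup E] [InnerProductSpace ℝ E]

open Classical in
/-- The MCP penalty function with parameters `lam > 0` and `θ > 0`. -/
def mcp (lam θ t : ℝ) : ℝ :=
  if |t| ≤ θ * lam then lam * |t| - t^2 / (2*θ)
  else θ * lam^2 / 2

section Quadratic

variable [FiniteDimensional ℝ E]

theorem LinearMap.IsSymmetric.exists_pos_mul_inner_le_norm_sq {T : E →ₗ[ℝ] E}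
    (hT : T.IsSymmetric) : ∃ μ > 0, ∀ y, μ * ⟪T y, y⟫ ≤ ‖T y‖ ^ 2 := by
  set K := LinearMap.ker T
  have hinj : LinearMap.ker (T.domRestrict Kᗮ) = ⊥ := by
    rw [LinearMap.ker_eq_bot']
    intro u hu
    exact Subtype.ext ((Submodule.orthogonal_disjoint K).le_bot ⟨hu, u.2⟩)
  obtain ⟨C, -, hC⟩ := (T.domRestrict Kᗮ).exists_antilipschitzWith hinj
  obtain ⟨μ, hμ, hbound⟩ := antilipschitzWith_iff_exists_mul_le_norm.mp ⟨C, hC⟩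
  refine ⟨μ, hμ, fun y => ?_⟩
  set a := K.starProjection y
  have hTa : T a = 0 := K.starProjection_apply_mem y
  have hTy : T y = T (y - a) := by rw [map_sub, hTa, sub_zero]
  have hinner : ⟪T y, y⟫ = ⟪T (y - a), y - a⟫ := by
    rw [← hTy, inner_sub_right, hT y a, hTa, inner_zero_right, sub_zero]
  have hu : μ * ‖y - a‖ ≤ ‖T (y - a)‖ := hbound ⟨y - a, K.sub_starProjection_mem_orthogonal y⟩
  calc μ * ⟪T y, y⟫ ≤ ‖T (y - a)‖ * (μ * ‖y - a‖) := by
        rw [hinner, mul_left_comm]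
        exact mul_le_mul_of_nonneg_left (real_inner_le_norm _ _) hμ.le
    _ ≤ ‖T y‖ ^ 2 := by rw [hTy, sq]; gcongr

theorem LinearMap.IsSymmetric.eventually_mul_sqrt_le_norm {T : E →ₗ[ℝ] E}
    (hT : T.IsSymmetric) (g : E) :
    ∀ᶠ δ in 𝓝 (0 : ℝ), ∀ y : E, ‖y‖ ≤ δ → ⟪g, y⟫ + 1 / 2 * ⟪T y, y⟫ < δ →
      δ * √(⟪g, y⟫ + 1 / 2 * ⟪T y, y⟫) ≤ ‖g + T y‖ := by
  rcases eq_or_ne g 0 with rfl | hg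
  · obtain ⟨μ, hμ, hμT⟩ := hT.exists_pos_mul_inner_le_norm_sq
    filter_upwards [eventually_le_nhds (Real.sqrt_pos.2 (by positivity : 0 < 2 * μ))]
      with δ hδ y _ _
    simp only [inner_zero_left, zero_add]
    calc δ * √(1 / 2 * ⟪T y, y⟫) ≤ √(2 * μ) * √(1 / 2 * ⟪T y, y⟫) := by gcongr
      _ = √(μ * ⟪T y, y⟫) := by rw [← Real.sqrt_mul (by positivity)]; ring_nf
      _ ≤ √(‖T y‖ ^ 2) := Real.sqrt_le_sqrt (hμT y)
      _ = ‖T y‖ := Real.sqrt_sq (norm_nonneg _)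
  · have hg : 0 < ‖g‖ / 2 := by positivity
    set C := ‖LinearMap.toContinuousLinearMap T‖
    have hC : Tendsto (fun δ => C * δ) (𝓝 0) (𝓝 0) := by
      simpa using (tendsto_id (x := 𝓝 (0 : ℝ))).const_mul C
    filter_upwards [eventually_le_nhds one_pos, hC.eventually (eventually_le_nhds hg),
      eventually_le_nhds (pow_pos hg 2)] with δ hδ₁ hδC hδg y hy hq
    have hTy : ‖T y‖ ≤ ‖g‖ / 2 := calc
      ‖T y‖ ≤ C * ‖y‖ := (LinearMap.toContinuousLinearMap T).le_opNorm y
      _ ≤ C * δ := by gcongr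
      _ ≤ ‖g‖ / 2 := hδC
    have hsqrt : √(⟪g, y⟫ + 1 / 2 * ⟪T y, y⟫) ≤ ‖g‖ / 2 :=
      Real.sqrt_le_iff.2 ⟨hg.le, by linarith⟩
    have htri : ‖g‖ ≤ ‖g + T y‖ + ‖T y‖ := by
      simpa using norm_sub_le (g + T y) (T y)
    calc δ * √(⟪g, y⟫ + 1 / 2 * ⟪T y, y⟫) ≤ 1 * (‖g‖ / 2) := by gcongr
      _ ≤ ‖g + T y‖ := by linarith

theorem LinearMap.IsSymmetric.eventually_mul_sqrt_le_norm_of_sub_mem_orthogonal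
    {H : E →ₗ[ℝ] E} (hH : H.IsSymmetric) (V : Submodule ℝ E) (g : E) :
    ∀ᶠ δ in 𝓝 (0 : ℝ), ∀ y ∈ V, ‖y‖ ≤ δ → ⟪g, y⟫ + 1 / 2 * ⟪H y, y⟫ < δ →
      ∀ v, v - (g + H y) ∈ Vᗮ → δ * √(⟪g, y⟫ + 1 / 2 * ⟪H y, y⟫) ≤ ‖v‖ := by
  set P : E →ₗ[ℝ] E := V.starProjection.toLinearMap
  have hP : P.IsSymmetric := V.starProjection_isSymmetric
  have hPHP : (P ∘ₗ H ∘ₗ P).IsSymmetric := fun x y => by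
    simp only [LinearMap.comp_apply, hP _ y, hH _ (P y), hP x]
  filter_upwards [hPHP.eventually_mul_sqrt_le_norm (P g)] with δ hδ y hyV hy hq v hv
  have hPy : P y = y := V.starProjection_eq_self_iff.2 hyV
  have hq_eq : ⟪g, y⟫ + 1 / 2 * ⟪H y, y⟫ = ⟪P g, y⟫ + 1 / 2 * ⟪(P ∘ₗ H ∘ₗ P) y, y⟫ := by
    simp only [LinearMap.comp_apply, hP _ y, hPy]
  have hPv : P v = P g + (P ∘ₗ H ∘ₗ P) y := by
    have : P (v - (g + H y)) = 0 := V.starProjection_apply_eq_zero_iff.2 hv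
    rw [map_sub, map_add, sub_eq_zero] at this
    simp only [LinearMap.comp_apply, hPy, this]
  rw [hq_eq] at hq ⊢
  calc δ * √(⟪P g, y⟫ + 1 / 2 * ⟪(P ∘ₗ H ∘ₗ P) y, y⟫) ≤ ‖P v‖ := hPv ▸ hδ y hy hq
    _ ≤ ‖v‖ := V.norm_starProjection_apply_le v

end Quadratic

theorem klAt_coe_of_forall_le_norm {f : E → ℝ} {xbar : E} {α c ε ν : ℝ} (hc : 0 < c)
    (hε : 0 < ε) (hν : 0 < ν)
    (h : ∀ x, ‖x - xbar‖ ≤ ε → f xbar < f x → f x < f xbar + ν →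
      ∀ v ∈ limSubdiff (fun x => (f x : EReal)) x, c * (f x - f xbar) ^ α ≤ ‖v‖) :
    KLAt (fun x => (f x : EReal)) xbar α := by
  refine ⟨c, hc, ε, hε, ν, EReal.coe_pos.2 hν, fun x hx hlow hhigh => ?_⟩
  rw [← EReal.coe_add] at hhigh
  rw [← EReal.coe_sub, EReal.toReal_coe]
  refine Metric.le_infEDist.2 fun v hv => ?_
  rw [edist_dist, dist_zero_left]
  exact ENNReal.ofReal_le_ofReal
    (h x hx (EReal.coe_lt_coe_iff.1 hlow) (EReal.coe_lt_coe_iff.1 hhigh) v hv)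

theorem klAt_half_of_eventually_quadratic {ι : Type*} [Finite ι] [FiniteDimensional ℝ E]
    {f : E → ℝ} {xbar : E} (V : ι → Submodule ℝ E) (g : ι → E) (H : ι → E →ₗ[ℝ] E)
    (hH : ∀ k, (H k).IsSymmetric)
    (hf : ∀ᶠ x in 𝓝 xbar, ∃ k, x - xbar ∈ V k ∧
      f x - f xbar = ⟪g k, x - xbar⟫ + 1 / 2 * ⟪H k (x - xbar), x - xbar⟫ ∧
      ∀ v ∈ limSubdiff (fun x => (f x : EReal)) x, v - (g k + H k (x - xbar)) ∈ (V k)ᗮ) :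
    KLAt (fun x => (f x : EReal)) xbar (1 / 2) := by
  obtain ⟨ε, hε, hfε⟩ := Metric.eventually_nhds_iff.1 hf
  have hδ : ∀ᶠ δ in 𝓝[>] (0 : ℝ), δ < ε ∧ ∀ k, ∀ y ∈ V k, ‖y‖ ≤ δ →
      ⟪g k, y⟫ + 1 / 2 * ⟪H k y, y⟫ < δ → ∀ v, v - (g k + H k y) ∈ (V k)ᗮ →
        δ * √(⟪g k, y⟫ + 1 / 2 * ⟪H k y, y⟫) ≤ ‖v‖ :=
    nhdsWithin_le_nhds ((eventually_lt_nhds hε).and (eventually_all.2 fun k =>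
      (hH k).eventually_mul_sqrt_le_norm_of_sub_mem_orthogonal (V k) (g k)))
  obtain ⟨δ, ⟨hδε, hδ⟩, hδpos⟩ := (hδ.and self_mem_nhdsWithin).exists
  refine klAt_coe_of_forall_le_norm hδpos hδpos hδpos fun x hx hlow hhigh v hv => ?_
  obtain ⟨k, hk, hfx, hvk⟩ := hfε (by rw [dist_eq_norm]; linarith)
  rw [← Real.sqrt_eq_rpow, hfx]
  exact hδ k _ hk hx (by linarith) v (hvk v hv)

theorem eventually_mem_of_isClosed_of_forall_mem {X ι : Type*} [TopologicalSpace X] [Finite ι]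
    {R : ι → Set X} (hR : ∀ k, IsClosed (R k)) {s : X → ι} (hs : ∀ x, x ∈ R (s x)) (a : X) :
    ∀ᶠ x in 𝓝 a, a ∈ R (s x) := by
  have h : ∀ᶠ x in 𝓝 a, ∀ k, a ∉ R k → x ∉ R k := eventually_all.2 fun k => by
    by_cases ha : a ∈ R k
    · exact Eventually.of_forall fun _ h => absurd ha h
    · filter_upwards [(hR k).isOpen_compl.mem_nhds ha] with x hx _ using hx
  filter_upwards [h] with x hx
  by_contra ha
  exact hx _ ha (hs x)

theorem eq_of_hasDerivAt_of_forall_eventually_le {φ : ℝ → ℝ} {w D : ℝ}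
    (hφ : HasDerivAt φ D 0) (h : ∀ ε > 0, ∀ᶠ t in 𝓝 0, φ 0 + w * t - ε * |t| ≤ φ t) :
    w = D := by
  have hs := hasDerivAt_iff_tendsto_slope.1 hφ
  have hle : ∀ ε > 0, w - ε ≤ D := fun ε hε =>
    ge_of_tendsto (hs.mono_left (nhdsGT_le_nhdsNE 0)) <| by
      filter_upwards [nhdsWithin_le_nhds (h ε hε), self_mem_nhdsWithin] with t ht (htpos : 0 < t)
      rw [slope_def_field, sub_zero, le_div_iff₀ htpos]
      rw [abs_of_pos htpos] at ht
      linarith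
  have hge : ∀ ε > 0, D ≤ w + ε := fun ε hε =>
    le_of_tendsto (hs.mono_left (nhdsLT_le_nhdsNE 0)) <| by
      filter_upwards [nhdsWithin_le_nhds (h ε hε), self_mem_nhdsWithin] with t ht (htneg : t < 0)
      rw [slope_def_field, sub_zero, div_le_iff_of_neg htneg]
      rw [abs_of_neg htneg] at ht
      linarith
  refine le_antisymm (le_of_forall_pos_le_add fun ε hε => by linarith [hle ε hε]) ?_
  exact le_of_forall_pos_le_add fun ε hε => hge ε hε

theorem inner_eq_of_mem_regSubdiff {f : E → ℝ} {x v e : E} {D : ℝ}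
    (hv : v ∈ regSubdiff (fun x => (f x : EReal)) x)
    (hD : HasDerivAt (fun t : ℝ => f (x + t • e)) D 0) : ⟪v, e⟫ = D := by
  refine eq_of_hasDerivAt_of_forall_eventually_le hD fun ε hε => ?_
  have hline : Tendsto (fun t : ℝ => x + t • e) (𝓝 0) (𝓝 x) := by
    have : Continuous fun t : ℝ => x + t • e := by fun_prop
    simpa using this.tendsto 0
  filter_upwards [hline.eventually (hv.2 (ε / (‖e‖ + 1)) (by positivity))] with t ht
  rw [add_sub_cancel_left, ← EReal.coe_add, EReal.coe_le_coe_iff, inner_smul_right,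
    norm_smul, Real.norm_eq_abs] at ht
  have : ε / (‖e‖ + 1) * (|t| * ‖e‖) ≤ ε * |t| := by
    rw [div_mul_eq_mul_div, div_le_iff₀ (by positivity)]
    nlinarith [abs_nonneg t, norm_nonneg e, mul_nonneg hε.le (abs_nonneg t)]
  simp only [zero_smul, add_zero]
  linarith

theorem inner_eq_of_mem_limSubdiff {f : E → ℝ} {x v e : E} {D : E → ℝ}
    (hD : ∀ᶠ x' in 𝓝 x, HasDerivAt (fun t : ℝ => f (x' + t • e)) (D x') 0)
    (hDx : ContinuousAt D x) (hv : v ∈ limSubdiff (fun x => (f x : EReal)) x) :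
    ⟪v, e⟫ = D x := by
  obtain ⟨-, xs, vs, hxs, -, hvs, hreg⟩ := hv
  have heq : (fun t => D (xs t)) =ᶠ[atTop] fun t => ⟪vs t, e⟫ :=
    (hxs.eventually hD).mono fun t ht => (inner_eq_of_mem_regSubdiff (hreg t) ht).symm
  exact tendsto_nhds_unique (hvs.inner tendsto_const_nhds) ((hDx.tendsto.comp hxs).congr' heq)

theorem hasDerivAt_max_zero_sq (u : ℝ) :
    HasDerivAt (fun u : ℝ => max u 0 ^ 2) (2 * max u 0) u := by
  rcases lt_trichotomy u 0 with hu | rfl | hu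
  · rw [max_eq_right hu.le, mul_zero]
    refine (hasDerivAt_const u (0 : ℝ)).congr_of_eventuallyEq ?_
    filter_upwards [Iio_mem_nhds hu] with s (hs : s < 0)
    simp [max_eq_right (le_of_lt hs)]
  · have hle : HasDerivWithinAt (fun u : ℝ => max u 0 ^ 2) 0 (Iic 0) 0 :=
      (hasDerivWithinAt_const 0 _ (0 : ℝ)).congr
        (fun s (hs : s ≤ 0) => by simp [max_eq_right hs]) (by simp)
    have hge : HasDerivWithinAt (fun u : ℝ => max u 0 ^ 2) 0 (Ici 0) 0 :=
      ((hasDerivAt_pow 2 (0 : ℝ)).hasDerivWithinAt.congr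
        (fun s (hs : 0 ≤ s) => by simp [max_eq_left hs]) (by simp)).congr_deriv (by simp)
    simpa [Iic_union_Ici] using hle.union hge
  · rw [max_eq_left hu.le]
    refine (hasDerivAt_pow 2 u).congr_of_eventuallyEq ?_ |>.congr_deriv (by ring)
    filter_upwards [Ioi_mem_nhds hu] with s (hs : 0 < s)
    simp [max_eq_left (le_of_lt hs)]

section MCP

variable {lam θ : ℝ}

def mcpDeriv (lam θ t : ℝ) : ℝ := SignType.sign t * max (lam - |t| / θ) 0

theorem mcp_eq_add_max_sq (hθ : θ ≠ 0) (t : ℝ) :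
    mcp lam θ t = lam * |t| - t ^ 2 / (2 * θ) + max (|t| - θ * lam) 0 ^ 2 / (2 * θ) := by
  unfold mcp
  split_ifs with h
  · rw [max_eq_right (by linarith)]
    ring
  · rw [max_eq_left (by linarith), ← sq_abs t]
    field_simp
    ring

theorem hasDerivAt_mcp (hθ : 0 < θ) {t : ℝ} (ht : t ≠ 0) :
    HasDerivAt (mcp lam θ) (mcpDeriv lam θ t) t := by
  have habs := hasDerivAt_abs ht
  have h := ((habs.const_mul lam).sub ((hasDerivAt_pow 2 t).div_const (2 * θ))).add
    (((hasDerivAt_max_zero_sq _).comp t (habs.sub_const (θ * lam))).div_const (2 * θ))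
  rw [show mcp lam θ = _ from funext (mcp_eq_add_max_sq hθ.ne')]
  refine h.congr_deriv ?_
  have hsign : (SignType.sign t : ℝ) * |t| = t := sign_mul_abs t
  unfold mcpDeriv
  rcases le_total |t| (θ * lam) with h | h
  · rw [max_eq_right (by linarith),
      max_eq_left (sub_nonneg.2 ((div_le_iff₀ hθ).2 (by linarith)))]
    field_simp
    linear_combination 2 * hsign
  · rw [max_eq_left (by linarith),
      max_eq_right (sub_nonpos.2 ((le_div_iff₀ hθ).2 (by linarith)))]
    field_simp
    linear_combination 2 * hsign

theorem continuousAt_mcpDeriv {t : ℝ} (ht : t ≠ 0) : ContinuousAt (mcpDeriv lam θ) t :=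
  ((continuous_of_discreteTopology.continuousAt (f := ((↑) : SignType → ℝ))).comp
    (continuousAt_sign_of_ne_zero ht)).mul (by fun_prop)

end MCP

inductive MCPPiece
  | zero
  | posInner
  | posOuter
  | negInner
  | negOuter
  deriving DecidableEq

instance : Fintype MCPPiece :=
  ⟨⟨{.zero, .posInner, .posOuter, .negInner, .negOuter}, by decide⟩,
    fun k => by cases k <;> decide⟩

namespace MCPPiece

variable (lam θ : ℝ)

def region : MCPPiece → Set ℝ
  | zero => {0}
  | posInner => Icc 0 (θ * lam)
  | posOuter => Ici (θ * lam)
  | negInner => Icc (-(θ * lam)) 0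
  | negOuter => Iic (-(θ * lam))

def quad : MCPPiece → ℝ → ℝ
  | zero, _ => 0
  | posInner, t => lam * t - t ^ 2 / (2 * θ)
  | posOuter, _ => θ * lam ^ 2 / 2
  | negInner, t => -(lam * t) - t ^ 2 / (2 * θ)
  | negOuter, _ => θ * lam ^ 2 / 2

def slope : MCPPiece → ℝ → ℝ
  | zero, _ => 0
  | posInner, t => lam - t / θ
  | posOuter, _ => 0
  | negInner, t => -lam - t / θ
  | negOuter, _ => 0

def curv : MCPPiece → ℝ
  | posInner | negInner => 1
  | zero | posOuter | negOuter => 0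

-- Only `0` is sent to `zero`, so the other pieces are used only where `mcp` is differentiable.
open Classical in
def of (t : ℝ) : MCPPiece :=
  if t = 0 then zero
  else if 0 < t then (if t ≤ θ * lam then posInner else posOuter)
  else (if -(θ * lam) ≤ t then negInner else negOuter)

variable {lam θ}

theorem isClosed_region (k : MCPPiece) : IsClosed (k.region lam θ) := by
  cases k
  exacts [isClosed_singleton, isClosed_Icc, isClosed_Ici, isClosed_Icc, isClosed_Iic]

theorem mem_region_of (t : ℝ) : t ∈ (of lam θ t).region lam θ := by
  unfold of
  split_ifs with h₀ h₁ h₂ h₂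
  · exact h₀
  · exact ⟨h₁.le, h₂⟩
  · exact (not_le.1 h₂).le
  · exact ⟨h₂, not_lt.1 h₁⟩
  · exact (not_le.1 h₂).le

theorem of_zero : of lam θ 0 = zero := by simp [of]

theorem mcp_eq_quad (hlam : 0 ≤ lam) (hθ : 0 < θ) {k : MCPPiece} {t : ℝ}
    (ht : t ∈ k.region lam θ) : mcp lam θ t = k.quad lam θ t := by
  have hθlam : 0 ≤ θ * lam := mul_nonneg hθ.le hlam
  cases k <;> simp only [region, mem_singleton_iff, mem_Icc, mem_Ici, mem_Iic] at ht <;>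
    unfold mcp quad
  · simp [ht, hθlam]
  · rw [if_pos (by rw [abs_of_nonneg ht.1]; exact ht.2), abs_of_nonneg ht.1]
  · split_ifs with h
    · rw [le_antisymm (le_of_abs_le h) ht, abs_of_nonneg hθlam]
      field_simp
      ring
    · rfl
  · rw [if_pos (by rw [abs_of_nonpos ht.2]; linarith), abs_of_nonpos ht.2]
    ring
  · split_ifs with h
    · rw [le_antisymm ht (neg_le_of_abs_le h), abs_neg, abs_of_nonneg hθlam]
      field_simp
      ring
    · rfl

theorem mcpDeriv_eq_slope (hθ : 0 < θ) {k : MCPPiece} {t : ℝ} (ht : t ∈ k.region lam θ)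
    (ht0 : t ≠ 0) : mcpDeriv lam θ t = k.slope lam θ t := by
  cases k <;> simp only [region, mem_singleton_iff, mem_Icc, mem_Ici, mem_Iic] at ht <;>
    simp only [mcpDeriv, slope]
  · exact absurd ht ht0
  · rw [sign_pos (lt_of_le_of_ne ht.1 (Ne.symm ht0)), abs_of_nonneg ht.1,
      max_eq_left (sub_nonneg.2 ((div_le_iff₀ hθ).2 (by linarith)))]
    simp
  · rw [max_eq_right (sub_nonpos.2 ((le_div_iff₀ hθ).2 (by linarith [le_abs_self t]))),
      mul_zero]
  · rw [sign_neg (lt_of_le_of_ne ht.2 ht0), abs_of_nonpos ht.2,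
      max_eq_left (sub_nonneg.2 ((div_le_iff₀ hθ).2 (by linarith)))]
    simp only [SignType.coe_neg_one]
    ring
  · rw [max_eq_right (sub_nonpos.2 ((le_div_iff₀ hθ).2 (by linarith [neg_le_abs t]))),
      mul_zero]

theorem quad_add_sub (k : MCPPiece) (a y : ℝ) :
    k.quad lam θ (a + y) - k.quad lam θ a = k.slope lam θ a * y - k.curv * y ^ 2 / (2 * θ) := by
  cases k <;> simp only [quad, slope, curv] <;> ring

theorem slope_add (k : MCPPiece) (a y : ℝ) :
    k.slope lam θ (a + y) = k.slope lam θ a - k.curv * y / θ := by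
  cases k <;> simp only [slope, curv] <;> ring

end MCPPiece

section LeastSquaresMCP

variable {n : ℕ} {F : Type*} [NormedAddCommGroup F] [InnerProductSpace ℝ F]
  (A : EuclideanSpace ℝ (Fin n) →ₗ[ℝ] F) (b : F) {lam θ : ℝ}

def mcpLeastSquares (lam θ : ℝ) (x : EuclideanSpace ℝ (Fin n)) : ℝ :=
  1 / 2 * ‖A x - b‖ ^ 2 + ∑ i, mcp lam θ (x i)

theorem hasDerivAt_mcpLeastSquares_add_smul_single (hθ : 0 < θ)
    {x : EuclideanSpace ℝ (Fin n)} {i : Fin n} (hi : x i ≠ 0) :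
    HasDerivAt (fun t : ℝ => mcpLeastSquares A b lam θ (x + t • EuclideanSpace.single i 1))
      (⟪A x - b, A (EuclideanSpace.single i 1)⟫ + mcpDeriv lam θ (x i)) 0 := by
  set e : EuclideanSpace ℝ (Fin n) := EuclideanSpace.single i 1
  have hres : HasDerivAt (fun t : ℝ => A (x + t • e) - b) (A e) 0 := by
    simpa [add_sub_right_comm] using
      ((hasDerivAt_id (0 : ℝ)).smul_const (A e)).const_add (A x - b)
  have hpen : ∀ t : ℝ, ∑ j, mcp lam θ ((x + t • e) j) =
      mcp lam θ (x i + t) + ∑ j ∈ Finset.univ.erase i, mcp lam θ (x j) := fun t => by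
    rw [← Finset.add_sum_erase _ _ (Finset.mem_univ i)]
    congr 1
    · simp [e]
    · exact Finset.sum_congr rfl fun j hj => by simp [e, Finset.ne_of_mem_erase hj]
  have h := (hres.norm_sq.const_mul (1 / 2)).add
    (((hasDerivAt_mcp (lam := lam) hθ (by simpa using hi)).comp_const_add (x i) 0).add_const
      (∑ j ∈ Finset.univ.erase i, mcp lam θ (x j)))
  simp only [mcpLeastSquares, hpen]
  exact h.congr_deriv (by simp)

theorem apply_eq_of_mem_limSubdiff_mcpLeastSquares [FiniteDimensional ℝ F] (hθ : 0 < θ)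
    {x v : EuclideanSpace ℝ (Fin n)}
    (hv : v ∈ limSubdiff (fun x => (mcpLeastSquares A b lam θ x : EReal)) x) {i : Fin n}
    (hi : x i ≠ 0) :
    v i = ⟪A x - b, A (EuclideanSpace.single i 1)⟫ + mcpDeriv lam θ (x i) := by
  have hcoord : Continuous fun x : EuclideanSpace ℝ (Fin n) => x i := by fun_prop
  have hA : Continuous A := A.continuous_of_finiteDimensional
  have h := inner_eq_of_mem_limSubdiff
    (D := fun x' => ⟪A x' - b, A (EuclideanSpace.single i 1)⟫ + mcpDeriv lam θ (x' i))
    ((hcoord.continuousAt.eventually_ne hi).mono fun x' hx' =>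
      hasDerivAt_mcpLeastSquares_add_smul_single A b hθ hx')
    (((hA.sub continuous_const).inner continuous_const).continuousAt.add
      (ContinuousAt.comp (f := fun x' : EuclideanSpace ℝ (Fin n) => x' i)
        (continuousAt_mcpDeriv hi) hcoord.continuousAt)) hv
  simpa [EuclideanSpace.inner_single_right] using h

variable (lam θ) in
def mcpPieceModel (p : Fin n → MCPPiece) (x : EuclideanSpace ℝ (Fin n)) : ℝ :=
  1 / 2 * ‖A x - b‖ ^ 2 + ∑ i, (p i).quad lam θ (x i)

theorem mcpLeastSquares_eq_mcpPieceModel (hlam : 0 ≤ lam) (hθ : 0 < θ) {p : Fin n → MCPPiece}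
    {x : EuclideanSpace ℝ (Fin n)} (hx : ∀ i, x i ∈ (p i).region lam θ) :
    mcpLeastSquares A b lam θ x = mcpPieceModel A b lam θ p x := by
  rw [mcpLeastSquares, mcpPieceModel]
  congr 1
  exact Finset.sum_congr rfl fun i _ => MCPPiece.mcp_eq_quad hlam hθ (hx i)

variable [FiniteDimensional ℝ F]

variable (lam θ) in
def mcpPieceGrad (p : Fin n → MCPPiece) (x : EuclideanSpace ℝ (Fin n)) :
    EuclideanSpace ℝ (Fin n) :=
  A.adjoint (A x - b) + WithLp.toLp 2 fun i => (p i).slope lam θ (x i)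

variable (θ) in
def mcpPieceHess (p : Fin n → MCPPiece) :
    EuclideanSpace ℝ (Fin n) →ₗ[ℝ] EuclideanSpace ℝ (Fin n) :=
  A.adjoint ∘ₗ A - Matrix.toEuclideanLin (Matrix.diagonal fun i => (p i).curv / θ)

theorem isSymmetric_mcpPieceHess (p : Fin n → MCPPiece) : (mcpPieceHess A θ p).IsSymmetric :=
  (LinearMap.isSymmetric_adjoint_comp_self A).sub
    (Matrix.isSymmetric_toEuclideanLin_iff.2 (Matrix.isHermitian_diagonal _))

theorem mcpPieceHess_apply (p : Fin n → MCPPiece) (y : EuclideanSpace ℝ (Fin n)) (i : Fin n) :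
    mcpPieceHess A θ p y i = A.adjoint (A y) i - (p i).curv / θ * y i := by
  simp [mcpPieceHess, Matrix.mulVec_diagonal]

theorem mcpPieceGrad_add (p : Fin n → MCPPiece) (x y : EuclideanSpace ℝ (Fin n)) :
    mcpPieceGrad A b lam θ p (x + y) = mcpPieceGrad A b lam θ p x + mcpPieceHess A θ p y := by
  ext i
  simp only [mcpPieceGrad, PiLp.add_apply, mcpPieceHess_apply, map_add, add_sub_right_comm,
    MCPPiece.slope_add]
  ring

theorem mcpPieceModel_add_sub (p : Fin n → MCPPiece) (x y : EuclideanSpace ℝ (Fin n)) :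
    mcpPieceModel A b lam θ p (x + y) - mcpPieceModel A b lam θ p x =
      ⟪mcpPieceGrad A b lam θ p x, y⟫ + 1 / 2 * ⟪mcpPieceHess A θ p y, y⟫ := by
  have hres : ‖A (x + y) - b‖ ^ 2 = ‖A x - b‖ ^ 2 + 2 * ⟪A x - b, A y⟫ + ‖A y‖ ^ 2 := by
    rw [map_add, add_sub_right_comm, norm_add_sq_real]
  have hpen : ∑ i, (p i).quad lam θ ((x + y) i) - ∑ i, (p i).quad lam θ (x i) =
      ∑ i, (p i).slope lam θ (x i) * y i - 1 / 2 * ∑ i, (p i).curv / θ * y i * y i := by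
    rw [← Finset.sum_sub_distrib, Finset.mul_sum, ← Finset.sum_sub_distrib]
    refine Finset.sum_congr rfl fun i _ => ?_
    rw [PiLp.add_apply, MCPPiece.quad_add_sub]
    ring
  have hgrad : ⟪mcpPieceGrad A b lam θ p x, y⟫ =
      ⟪A x - b, A y⟫ + ∑ i, (p i).slope lam θ (x i) * y i := by
    rw [mcpPieceGrad, inner_add_left, LinearMap.adjoint_inner_left]
    simp [PiLp.inner_apply, mul_comm]
  have hhess : ⟪mcpPieceHess A θ p y, y⟫ = ‖A y‖ ^ 2 - ∑ i, (p i).curv / θ * y i * y i := by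
    rw [mcpPieceHess, LinearMap.sub_apply, inner_sub_left, LinearMap.comp_apply,
      LinearMap.adjoint_inner_left, real_inner_self_eq_norm_sq]
    simp [PiLp.inner_apply, Matrix.mulVec_diagonal, mul_comm]
  rw [mcpPieceModel, mcpPieceModel, hgrad, hhess]
  linear_combination (1 / 2 : ℝ) * hres + hpen

def mcpPieceSubspace (p : Fin n → MCPPiece) : Submodule ℝ (EuclideanSpace ℝ (Fin n)) where
  carrier := {y | ∀ i, p i = .zero → y i = 0}
  add_mem' hy hz i hi := by simp [hy i hi, hz i hi]
  zero_mem' _ _ := rfl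
  smul_mem' _ _ hy i hi := by simp [hy i hi]

theorem mem_mcpPieceSubspace {p : Fin n → MCPPiece} {y : EuclideanSpace ℝ (Fin n)} :
    y ∈ mcpPieceSubspace p ↔ ∀ i, p i = .zero → y i = 0 := Iff.rfl

theorem sub_mcpPieceGrad_mem_orthogonal (hθ : 0 < θ) {x v : EuclideanSpace ℝ (Fin n)}
    (hv : v ∈ limSubdiff (fun x => (mcpLeastSquares A b lam θ x : EReal)) x) :
    v - mcpPieceGrad A b lam θ (fun i => MCPPiece.of lam θ (x i)) x ∈
      (mcpPieceSubspace fun i => MCPPiece.of lam θ (x i))ᗮ := by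
  refine (Submodule.mem_orthogonal' _ _).2 fun w hw => ?_
  rw [PiLp.inner_apply]
  refine Finset.sum_eq_zero fun i _ => ?_
  by_cases hxi : x i = 0
  · rw [mem_mcpPieceSubspace.1 hw i (by rw [hxi, MCPPiece.of_zero]), inner_zero_right]
  · have hAi : A.adjoint (A x - b) i = ⟪A x - b, A (EuclideanSpace.single i 1)⟫ := by
      rw [← LinearMap.adjoint_inner_left, EuclideanSpace.inner_single_right]
      simp
    have hvi : (v - mcpPieceGrad A b lam θ (fun i => MCPPiece.of lam θ (x i)) x) i = 0 := by
      rw [PiLp.sub_apply, mcpPieceGrad, PiLp.add_apply, hAi,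
        apply_eq_of_mem_limSubdiff_mcpLeastSquares A b hθ hv hxi,
        MCPPiece.mcpDeriv_eq_slope hθ (MCPPiece.mem_region_of (x i)) hxi]
      simp
    rw [hvi, inner_zero_left]

theorem klAt_mcpLeastSquares (hlam : 0 ≤ lam) (hθ : 0 < θ) (xbar : EuclideanSpace ℝ (Fin n)) :
    KLAt (fun x => (mcpLeastSquares A b lam θ x : EReal)) xbar (1 / 2) := by
  refine klAt_half_of_eventually_quadratic mcpPieceSubspace
    (fun p => mcpPieceGrad A b lam θ p xbar) (mcpPieceHess A θ) (isSymmetric_mcpPieceHess A) ?_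
  have hR : ∀ p : Fin n → MCPPiece,
      IsClosed {x : EuclideanSpace ℝ (Fin n) | ∀ i, x i ∈ (p i).region lam θ} := fun p => by
    simp only [ofPred_forall]
    exact isClosed_iInter fun i => (MCPPiece.isClosed_region _).preimage (by fun_prop)
  filter_upwards [eventually_mem_of_isClosed_of_forall_mem hR
    (s := fun x i => MCPPiece.of lam θ (x i)) (fun x i => MCPPiece.mem_region_of (x i)) xbar]
    with x hxbar
  have hx : ∀ i, x i ∈ (MCPPiece.of lam θ (x i)).region lam θ :=
    fun i => MCPPiece.mem_region_of (x i)
  refine ⟨fun i => MCPPiece.of lam θ (x i), ?_, ?_, fun v hv => ?_⟩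
  · refine mem_mcpPieceSubspace.2 fun i hi => ?_
    have h₁ := hx i
    have h₂ := hxbar i
    simp only [hi, MCPPiece.region, mem_singleton_iff] at h₁ h₂
    simp [h₁, h₂]
  · rw [mcpLeastSquares_eq_mcpPieceModel A b hlam hθ hx,
      mcpLeastSquares_eq_mcpPieceModel A b hlam hθ hxbar, ← mcpPieceModel_add_sub,
      add_sub_cancel]
  · rw [← mcpPieceGrad_add, add_sub_cancel]
    exact sub_mcpPieceGrad_mem_orthogonal A b hθ hv

end LeastSquaresMCP

/-- The least squares loss with MCP regularization is a KL function
with exponent `1/2`. -/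
theorem stmt_16 {m n : ℕ}
    (A : EuclideanSpace ℝ (Fin n) →ₗ[ℝ] EuclideanSpace ℝ (Fin m))
    (b : EuclideanSpace ℝ (Fin m))
    (lam θ : ℝ) (hlam : 0 < lam) (hθ : 0 < θ)
    (f : EuclideanSpace ℝ (Fin n) → ℝ)
    (hf : ∀ x, f x = 1/2 * ‖A x - b‖^2 + ∑ i, mcp lam θ (x i)) :
    IsKL (fun x => ((f x : ℝ) : EReal)) (1/2) := by
  obtain rfl : f = mcpLeastSquares A b lam θ := funext hf
  exact fun xbar _ => klAt_mcpLeastSquares A b hlam.le hθ xbar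

end
end
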